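/- arXiv:1508.06919 — 4 statements merged into one kernel-verified Lean document; each statement's English description precedes it below -/
import Mathlib

section
/- Let (Y_n)_{n≥0} be a time-homogeneous Markov chain on a countable state space M with transition kernel κ (i.e. for every bounded f : M → ℝ and every n, E[f(Y_{n+1}) | Y_0,…,Y_n] = ∫ f dκ(Y_n) almost surely). Suppose there exist a function V : M → [0,∞), a constant b ≥ 0, a constant p₀ > 0, and two disjoint subsets M₀, M₁ of M such that: (i) for all x ∉ M₀, ∫ V dκ(x) ≤ V(x) − 1 + b·1{x ∈ M₁}; and (ii) for all x ∈ M₁, κ(x)(M₀) ≥ p₀. Let τ(M₀) := inf{n ≥ 1 : Y_n ∈ M₀}. Then for every x ∉ M₀, if the chain starts at Y_0 = x, one has E[τ(M₀)] ≤ V(x) + b/p₀ (in particular τ(M₀) < ∞ almost surely). -/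
open MeasureTheory ProbabilityTheory
open scoped ENNReal Classical

/-- **Lyapunov bound on an entrance time (Theorem 3.1).**
Let `(Y n)` be a time-homogeneous Markov chain on a countable state space `M`
with transition kernel `κ`.  Suppose there are a nonnegative function `V`,
constants `b ≥ 0` and `p₀ > 0`, and disjoint sets `M₀, M₁ ⊆ M` with
(i) `∫ V dκ(x) ≤ V x - 1 + b·1{x ∈ M₁}` for `x ∉ M₀`, and
(ii) `κ(x)(M₀) ≥ p₀` for `x ∈ M₁`.
Then for the chain started at `x ∉ M₀`, the first entrance time
`τ(M₀) = inf {n ≥ 1 : Y n ∈ M₀}` satisfies `E[τ(M₀)] ≤ V x + b / p₀`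
(the expectation is taken in `ℝ≥0∞`, so in particular `τ(M₀) < ∞` a.s.). -/
theorem entrance_time_expectation_le
    {Ω : Type*} [MeasurableSpace Ω] {μ : Measure Ω} [IsProbabilityMeasure μ]
    {M : Type*} [Countable M] [MeasurableSpace M] [MeasurableSingletonClass M]
    (κ : Kernel M M) [IsMarkovKernel κ]
    (Y : ℕ → Ω → M) (hYmeas : ∀ n, Measurable (Y n))
    -- (Y n) is a Markov chain with transition kernel κ :
    (hMarkov : ∀ (f : M → ℝ), (∃ C, ∀ y, |f y| ≤ C) → ∀ n : ℕ,
      μ[(fun ω => f (Y (n + 1) ω)) |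
          ⨆ k ∈ Finset.range (n + 1), MeasurableSpace.comap (Y k) inferInstance]
        =ᵐ[μ] fun ω => ∫ y, f y ∂(κ (Y n ω)))
    (V : M → ℝ) (hVnonneg : ∀ y, 0 ≤ V y)
    (b : ℝ) (hb : 0 ≤ b) (p₀ : ℝ) (hp₀ : 0 < p₀)
    (M₀ M₁ : Set M) (hdisj : Disjoint M₀ M₁)
    (hVint : ∀ x, Integrable V (κ x))
    -- condition (i) :
    (hdrift : ∀ x ∉ M₀, ∫ y, V y ∂(κ x) ≤ V x - 1 + (if x ∈ M₁ then b else 0))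
    -- condition (ii) :
    (hhit : ∀ x ∈ M₁, ENNReal.ofReal p₀ ≤ κ x M₀)
    (x : M) (hx : x ∉ M₀)
    -- the chain starts at x :
    (hY0 : ∀ᵐ ω ∂μ, Y 0 ω = x) :
    ∫⁻ ω, (⨅ (n : ℕ) (_ : 1 ≤ n ∧ Y n ω ∈ M₀), (n : ℝ≥0∞)) ∂μ
      ≤ ENNReal.ofReal (V x + b / p₀) := by
  classical
  have hMset : ∀ s : Set M, MeasurableSet s := fun s => s.to_countable.measurableSet
  set c : ℝ := b / p₀ with hcdef
  have hc0 : 0 ≤ c := div_nonneg hb hp₀.le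
  set U : M → ℝ := fun y => V y + (if y ∈ M₀ then 0 else c) with hUdef
  have hUnonneg : ∀ y, 0 ≤ U y := by
    intro y; dsimp [U]; split <;> [simpa using hVnonneg y; exact add_nonneg (hVnonneg y) hc0]
  have hind : (fun y => if y ∈ M₀ then (0:ℝ) else c) = M₀ᶜ.indicator (fun _ => c) := by
    funext y; by_cases h : y ∈ M₀ <;> simp [Set.indicator, h]
  have hUint : ∀ z, Integrable U (κ z) := by
    intro z
    refine (hVint z).add ?_
    rw [hind]
    exact (integrable_indicator_iff (hMset _)).2 (integrableOn_const (measure_ne_top _ _))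
  -- the improved Lyapunov function U satisfies a clean drift condition
  have hUdrift : ∀ z, z ∉ M₀ → ∫ y, U y ∂(κ z) ≤ U z - 1 := by
    intro z hz
    have hk1 : κ z M₀ ≠ ⊤ := measure_ne_top _ _
    have ht0 : 0 ≤ (κ z M₀).toReal := ENNReal.toReal_nonneg
    have ht1 : (κ z M₀).toReal ≤ 1 := by
      have := prob_le_one (μ := κ z) (s := M₀)
      calc (κ z M₀).toReal ≤ (1:ℝ≥0∞).toReal := ENNReal.toReal_mono (by simp) this
        _ = 1 := by simp
    have hcompl : ∫ y, (if y ∈ M₀ then (0:ℝ) else c) ∂(κ z)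
        = c * (1 - (κ z M₀).toReal) := by
      rw [hind, integral_indicator_const _ (hMset _)]
      have : κ z M₀ᶜ = 1 - κ z M₀ := by
        rw [measure_compl (hMset _) hk1]; simp
      rw [measureReal_def, this, smul_eq_mul, mul_comm]
      congr 1
      rw [ENNReal.toReal_sub_of_le (prob_le_one) (by simp)]
      simp
    have hint : ∫ y, U y ∂(κ z)
        = ∫ y, V y ∂(κ z) + c * (1 - (κ z M₀).toReal) := by
      rw [hUdef]
      rw [integral_add (hVint z) ?_, hcompl]
      rw [hind]
      exact (integrable_indicator_iff (hMset _)).2 (integrableOn_const (measure_ne_top _ _))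
    have hb1 : (if z ∈ M₁ then b else 0) ≤ c * (κ z M₀).toReal := by
      by_cases hz1 : z ∈ M₁
      · simp only [hz1, if_true]
        have hp : p₀ ≤ (κ z M₀).toReal :=
          (ENNReal.ofReal_le_iff_le_toReal hk1).1 (hhit z hz1)
        calc b = c * p₀ := by rw [hcdef, div_mul_cancel₀ _ hp₀.ne']
          _ ≤ c * (κ z M₀).toReal := by
              exact mul_le_mul_of_nonneg_left hp hc0
      · simp only [hz1, if_false]
        exact mul_nonneg hc0 ht0
    have hUz : U z = V z + c := by simp [hUdef, hz]
    rw [hint, hUz]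
    have := hdrift z hz
    nlinarith [this]
  -- the events A n = {τ > n}
  set A : ℕ → Set Ω := fun n => ⋂ k ∈ Finset.Icc 1 n, Y k ⁻¹' M₀ᶜ with hAdef
  have hmemA : ∀ n ω, ω ∈ A n ↔ ∀ k, 1 ≤ k → k ≤ n → Y k ω ∉ M₀ := by
    intro n ω
    simp [hAdef, Set.mem_iInter]
  have hAmeas : ∀ n, MeasurableSet (A n) := by
    intro n
    exact Finset.measurableSet_biInter _ (fun k _ => (hYmeas k) (hMset _))
  have hAanti : ∀ n, A (n + 1) ⊆ A n := by
    intro n ω hω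
    rw [hmemA] at hω ⊢
    exact fun k h1 h2 => hω k h1 (h2.trans (Nat.le_succ n))
  -- the filtration
  set F : ℕ → MeasurableSpace Ω :=
    fun n => ⨆ k ∈ Finset.range (n + 1), MeasurableSpace.comap (Y k) inferInstance with hFdef
  have hFle : ∀ n, F n ≤ ‹MeasurableSpace Ω› := by
    intro n
    refine iSup_le fun k => iSup_le fun _ => ?_
    exact (hYmeas k).comap_le
  have hAmeasF : ∀ n, MeasurableSet[F n] (A n) := by
    intro n
    refine Finset.measurableSet_biInter _ (fun k hk => ?_)
    have hk' : k ∈ Finset.range (n + 1) := by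
      simp only [Finset.mem_Icc] at hk
      simp [Nat.lt_succ_of_le hk.2]
    have hle : MeasurableSpace.comap (Y k) inferInstance ≤ F n := by
      exact le_iSup₂ (f := fun k (_ : k ∈ Finset.range (n+1)) => MeasurableSpace.comap (Y k) inferInstance) k hk'
    exact hle _ ⟨M₀ᶜ, hMset _, rfl⟩
  -- key quantities
  set T : ℕ → ℝ≥0∞ := fun n => ∫⁻ ω in A n, ENNReal.ofReal (U (Y n ω)) ∂μ with hTdef
  -- integrability of truncations
  have hfcint : ∀ (g : Ω → M) (_ : Measurable g) (C : ℝ), 0 ≤ C →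
      Integrable (fun ω => min (U (g ω)) C) μ := by
    intro g hg C hC
    refine ⟨(Measurable.aestronglyMeasurable ?_ : AEStronglyMeasurable (fun ω => min (U (g ω)) C) μ), ?_⟩
    · exact Measurable.comp (g := fun z => min (U z) C) (measurable_of_countable _) hg
    refine HasFiniteIntegral.of_bounded (C := C) (Filter.Eventually.of_forall fun ω => ?_)
    rw [Real.norm_eq_abs, abs_of_nonneg (le_min (hUnonneg _) hC)]
    exact min_le_right _ _
  -- conditional expectation step, for truncations
  have hstep : ∀ (n : ℕ) (C : ℕ),
      ∫ ω in A n, min (U (Y (n+1) ω)) (C:ℝ) ∂μ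
        = ∫ ω in A n, (∫ y, min (U y) (C:ℝ) ∂(κ (Y n ω))) ∂μ := by
    intro n C
    have hbdd : ∃ B, ∀ y, |min (U y) (C:ℝ)| ≤ B :=
      ⟨C, fun y => by
        rw [abs_of_nonneg (le_min (hUnonneg _) (by positivity))]
        exact min_le_right _ _⟩
    have hmk := hMarkov (fun y => min (U y) (C:ℝ)) hbdd n
    have hint : Integrable (fun ω => min (U (Y (n+1) ω)) (C:ℝ)) μ :=
      hfcint (Y (n+1)) (hYmeas (n+1)) C (by positivity)
    rw [← setIntegral_condExp (hFle n) hint (hAmeasF n)]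
    exact setIntegral_congr_ae ((hFle n) _ (hAmeasF n)) (hmk.mono fun ω h _ => h)
  -- integrability of truncations w.r.t. the kernel
  have hfcintκ : ∀ (z : M) (C : ℝ), 0 ≤ C → Integrable (fun y => min (U y) C) (κ z) := by
    intro z C hC
    refine ⟨(measurable_of_countable _).aestronglyMeasurable, ?_⟩
    refine HasFiniteIntegral.of_bounded (C := C) (Filter.Eventually.of_forall fun y => ?_)
    rw [Real.norm_eq_abs, abs_of_nonneg (le_min (hUnonneg _) hC)]
    exact min_le_right _ _
  -- pointwise supremum identity
  have hsup1 : ∀ z : ℝ, 0 ≤ z → (⨆ C : ℕ, ENNReal.ofReal (min z (C:ℝ))) = ENNReal.ofReal z := by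
    intro z hz
    refine le_antisymm (iSup_le fun C => ENNReal.ofReal_le_ofReal (min_le_left _ _)) ?_
    refine le_iSup_of_le ⌈z⌉₊ ?_
    rw [min_eq_left (Nat.le_ceil z)]
  -- key identity via the Markov property and monotone convergence
  have hkey : ∀ n, (∫⁻ ω in A n, ENNReal.ofReal (U (Y (n+1) ω)) ∂μ)
      = ∫⁻ ω in A n, ENNReal.ofReal (∫ y, U y ∂(κ (Y n ω))) ∂μ := by
    intro n
    have hL : (∫⁻ ω in A n, ENNReal.ofReal (U (Y (n+1) ω)) ∂μ)
        = ⨆ C : ℕ, ∫⁻ ω in A n, ENNReal.ofReal (min (U (Y (n+1) ω)) (C:ℝ)) ∂μ := by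
      rw [← lintegral_iSup]
      · refine lintegral_congr fun ω => ?_
        rw [hsup1 _ (hUnonneg _)]
      · intro C
        exact Measurable.comp (g := fun z => ENNReal.ofReal (min (U z) (C:ℝ)))
          (measurable_of_countable _) (hYmeas (n+1))
      · intro C C' hCC ω
        exact ENNReal.ofReal_le_ofReal (min_le_min le_rfl (Nat.cast_le.2 hCC))
    have hR : (∫⁻ ω in A n, ENNReal.ofReal (∫ y, U y ∂(κ (Y n ω))) ∂μ)
        = ⨆ C : ℕ, ∫⁻ ω in A n, ENNReal.ofReal (∫ y, min (U y) (C:ℝ) ∂(κ (Y n ω))) ∂μ := by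
      have hpt : ∀ z : M, (⨆ C : ℕ, ENNReal.ofReal (∫ y, min (U y) (C:ℝ) ∂(κ z)))
          = ENNReal.ofReal (∫ y, U y ∂(κ z)) := by
        intro z
        have h1 : ∀ C : ℕ, ENNReal.ofReal (∫ y, min (U y) (C:ℝ) ∂(κ z))
            = ∫⁻ y, ENNReal.ofReal (min (U y) (C:ℝ)) ∂(κ z) := fun C =>
          ofReal_integral_eq_lintegral_ofReal (hfcintκ z C (by positivity))
            (Filter.Eventually.of_forall fun y => le_min (hUnonneg _) (by positivity))
        have h2 : ENNReal.ofReal (∫ y, U y ∂(κ z)) = ∫⁻ y, ENNReal.ofReal (U y) ∂(κ z) :=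
          ofReal_integral_eq_lintegral_ofReal (hUint z)
            (Filter.Eventually.of_forall fun y => hUnonneg y)
        simp_rw [h1, h2]
        rw [← lintegral_iSup]
        · exact lintegral_congr fun y => hsup1 _ (hUnonneg _)
        · intro C; exact measurable_of_countable _
        · intro C C' hCC y
          exact ENNReal.ofReal_le_ofReal (min_le_min le_rfl (Nat.cast_le.2 hCC))
      rw [← lintegral_iSup]
      · refine lintegral_congr fun ω => ?_
        rw [hpt (Y n ω)]
      · intro C
        exact Measurable.comp (g := fun z => ENNReal.ofReal (∫ y, min (U y) (C:ℝ) ∂(κ z)))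
          (measurable_of_countable _) (hYmeas n)
      · intro C C' hCC ω
        refine ENNReal.ofReal_le_ofReal ?_
        refine integral_mono (hfcintκ _ _ (by positivity)) (hfcintκ _ _ (by positivity)) ?_
        intro y
        exact min_le_min le_rfl (Nat.cast_le.2 hCC)
    rw [hL, hR]
    congr 1
    funext C
    have hi1 : Integrable (fun ω => min (U (Y (n+1) ω)) (C:ℝ)) (μ.restrict (A n)) :=
      (hfcint (Y (n+1)) (hYmeas (n+1)) C (by positivity)).restrict
    have hi2 : Integrable (fun ω => ∫ y, min (U y) (C:ℝ) ∂(κ (Y n ω))) (μ.restrict (A n)) := by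
      refine Integrable.restrict ?_
      refine ⟨(Measurable.aestronglyMeasurable ?_), ?_⟩
      · exact Measurable.comp (g := fun z => ∫ y, min (U y) (C:ℝ) ∂(κ z))
          (measurable_of_countable _) (hYmeas n)
      · refine HasFiniteIntegral.of_bounded (C := (C:ℝ))
          (Filter.Eventually.of_forall fun ω => ?_)
        have h := norm_integral_le_of_norm_le_const
          (μ := κ (Y n ω)) (f := fun y => min (U y) (C:ℝ)) (C := (C:ℝ))
          (Filter.Eventually.of_forall fun y => by
            rw [Real.norm_eq_abs, abs_of_nonneg (le_min (hUnonneg _) (by positivity))]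
            exact min_le_right _ _)
        simpa using h
    rw [← ofReal_integral_eq_lintegral_ofReal hi1
        (Filter.Eventually.of_forall fun ω => le_min (hUnonneg _) (by positivity)),
      ← ofReal_integral_eq_lintegral_ofReal hi2
        (Filter.Eventually.of_forall fun ω => integral_nonneg fun y => le_min (hUnonneg _) (by positivity))]
    rw [hstep n C]
  -- the one-step inequality
  have hdr : ∀ z, z ∉ M₀ → ENNReal.ofReal (∫ y, U y ∂(κ z)) + 1 ≤ ENNReal.ofReal (U z) := by
    intro z hz
    have h0 : 0 ≤ ∫ y, U y ∂(κ z) := integral_nonneg fun y => hUnonneg y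
    rw [← ENNReal.ofReal_one, ← ENNReal.ofReal_add h0 zero_le_one]
    refine ENNReal.ofReal_le_ofReal ?_
    linarith [hUdrift z hz]
  have hTstep : ∀ n, T (n+1) + μ (A n) ≤ T n := by
    intro n
    have hAnot : ∀ᵐ ω ∂μ, ω ∈ A n → Y n ω ∉ M₀ := by
      match n with
      | 0 => exact hY0.mono fun ω h _ => h ▸ hx
      | Nat.succ m =>
        refine Filter.Eventually.of_forall fun ω hω => ?_
        exact (hmemA (m+1) ω).1 hω (m+1) (Nat.succ_le_succ (Nat.zero_le m)) le_rfl
    calc T (n+1) + μ (A n)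
        ≤ (∫⁻ ω in A n, ENNReal.ofReal (∫ y, U y ∂(κ (Y n ω))) ∂μ) + μ (A n) := by
          refine add_le_add_left ?_ _
          exact le_of_le_of_eq (lintegral_mono_set (hAanti n)) (hkey n)
      _ = ∫⁻ ω in A n, (ENNReal.ofReal (∫ y, U y ∂(κ (Y n ω))) + 1) ∂μ := by
          rw [lintegral_add_right _ measurable_const, setLIntegral_one]
      _ ≤ ∫⁻ ω in A n, ENNReal.ofReal (U (Y n ω)) ∂μ := by
          refine lintegral_mono_ae ?_
          rw [ae_restrict_iff' (hAmeas n)]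
          exact hAnot.mono fun ω h hω => hdr _ (h hω)
      _ = T n := rfl
  -- summing up
  have hsumT : ∀ N, (∑ k ∈ Finset.range N, μ (A k)) + T N ≤ T 0 := by
    intro N
    induction N with
    | zero => simp
    | succ n ih =>
      calc (∑ k ∈ Finset.range (n+1), μ (A k)) + T (n+1)
          = (∑ k ∈ Finset.range n, μ (A k)) + (T (n+1) + μ (A n)) := by
            rw [Finset.sum_range_succ]; ring
        _ ≤ (∑ k ∈ Finset.range n, μ (A k)) + T n := add_le_add_right (hTstep n) _
        _ ≤ T 0 := ih
  have hT0 : T 0 ≤ ENNReal.ofReal (V x + b / p₀) := by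
    have h1 : T 0 ≤ ∫⁻ ω, ENNReal.ofReal (U (Y 0 ω)) ∂μ :=
      setLIntegral_le_lintegral _ _
    have h2 : (∫⁻ ω, ENNReal.ofReal (U (Y 0 ω)) ∂μ) = ENNReal.ofReal (U x) := by
      rw [lintegral_congr_ae (hY0.mono fun ω h => by rw [h])]
      simp
    have h3 : U x = V x + b / p₀ := by simp [hUdef, hx, hcdef]
    rw [h2, h3] at h1
    exact h1
  -- identify the entrance time with a sum of indicator functions
  have hτ : ∀ ω, (⨅ (n : ℕ) (_ : 1 ≤ n ∧ Y n ω ∈ M₀), (n : ℝ≥0∞))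
      = ∑' n : ℕ, (A n).indicator (fun _ => (1:ℝ≥0∞)) ω := by
    intro ω
    by_cases hex : ∃ m, 1 ≤ m ∧ Y m ω ∈ M₀
    · set m₀ := Nat.find hex with hm₀
      have hspec := Nat.find_spec hex
      have hval : (⨅ (n : ℕ) (_ : 1 ≤ n ∧ Y n ω ∈ M₀), (n : ℝ≥0∞)) = (m₀ : ℝ≥0∞) := by
        refine le_antisymm (iInf_le_of_le m₀ (iInf_le_of_le hspec le_rfl)) ?_
        refine le_iInf fun n => le_iInf fun hn => ?_
        exact_mod_cast Nat.find_min' hex hn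
      have hmem : ∀ n, ω ∈ A n ↔ n < m₀ := by
        intro n
        rw [hmemA]
        constructor
        · intro h
          by_contra hlt
          push_neg at hlt
          exact h m₀ hspec.1 hlt hspec.2
        · intro h k h1 h2
          exact fun hk => Nat.find_min hex (lt_of_le_of_lt h2 h) ⟨h1, hk⟩
      rw [hval]
      have : ∀ n : ℕ, (A n).indicator (fun _ => (1:ℝ≥0∞)) ω
          = if n < m₀ then 1 else 0 := by
        intro n
        by_cases h : ω ∈ A n
        · simp [Set.indicator_of_mem h, (hmem n).1 h]
        · rw [Set.indicator_of_notMem h, if_neg (fun hn => h ((hmem n).2 hn))]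
      simp_rw [this]
      rw [tsum_eq_sum (s := Finset.range m₀) (fun n hn => by
        simp [Finset.mem_range, not_lt] at hn
        simp [Nat.not_lt.2 hn])]
      rw [Finset.sum_congr rfl fun k hk => if_pos (Finset.mem_range.1 hk)]
      simp
    · push_neg at hex
      have hval : (⨅ (n : ℕ) (_ : 1 ≤ n ∧ Y n ω ∈ M₀), (n : ℝ≥0∞)) = ⊤ := by
        simp only [iInf_eq_top]
        intro n hn
        exact absurd hn.2 (hex n hn.1)
      have hmem : ∀ n, ω ∈ A n := by
        intro n
        rw [hmemA]
        exact fun k h1 _ => hex k h1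
      rw [hval]
      simp only [fun n => Set.indicator_of_mem (hmem n) (fun _ => (1:ℝ≥0∞))]
      exact (ENNReal.tsum_const_eq_top_of_ne_zero one_ne_zero).symm
  calc (∫⁻ ω, (⨅ (n : ℕ) (_ : 1 ≤ n ∧ Y n ω ∈ M₀), (n : ℝ≥0∞)) ∂μ)
      = ∫⁻ ω, (∑' n : ℕ, (A n).indicator (fun _ => (1:ℝ≥0∞)) ω) ∂μ :=
        lintegral_congr fun ω => hτ ω
    _ = ∑' n : ℕ, ∫⁻ ω, (A n).indicator (fun _ => (1:ℝ≥0∞)) ω ∂μ :=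
        lintegral_tsum fun n => (measurable_const.indicator (hAmeas n)).aemeasurable
    _ = ∑' n : ℕ, μ (A n) := by
        exact tsum_congr fun n => lintegral_indicator_one (hAmeas n)
    _ = ⨆ N, ∑ k ∈ Finset.range N, μ (A k) := ENNReal.tsum_eq_iSup_nat
    _ ≤ T 0 := iSup_le fun N => le_trans le_self_add (hsumT N)
    _ ≤ ENNReal.ofReal (V x + b / p₀) := hT0
end

section
/- Let (Y_n)_{n≥0} be a time-homogeneous Markov chain on a countable state space M with transition kernel κ, started at an arbitrary point x ∈ M. Let M₀, M₁ ⊆ M be disjoint subsets such that every state of M₀ is absorbing (κ(y)({y}) = 1 for all y ∈ M₀) and such that κ(y)(M₀) ≥ p₀ for all y ∈ M₁, where p₀ > 0. Let N := Σ_{i≥1} 1{Y_{i−1} ∈ M₁} be the total number of times i ≥ 0 at which the chain is in M₁. Then for every integer k ≥ 1, P(N > k) ≤ (1 − p₀)^k; in particular N is stochastically dominated by a geometric random variable with success probability p₀. -/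
open MeasureTheory ProbabilityTheory
open scoped ENNReal Classical

private lemma exists_nth_visit (p : ℕ → Prop) [DecidablePred p] :
    ∀ m j, j < ((Finset.range m).filter p).card →
      ∃ n < m, p n ∧ ((Finset.range n).filter p).card = j := by
  intro m
  induction m with
  | zero => simp
  | succ m ih =>
    intro j hj
    by_cases h : j < ((Finset.range m).filter p).card
    · obtain ⟨n, hn, hpn, hcard⟩ := ih j h
      exact ⟨n, hn.trans (Nat.lt_succ_self m), hpn, hcard⟩
    · have hsub : (Finset.range (m+1)).filter p ⊆ insert m ((Finset.range m).filter p) := by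
        intro i hi
        simp only [Finset.mem_filter, Finset.mem_range, Nat.lt_succ_iff_lt_or_eq,
          Finset.mem_insert] at hi ⊢
        tauto
      have hle : ((Finset.range (m+1)).filter p).card ≤ ((Finset.range m).filter p).card + 1 :=
        (Finset.card_le_card hsub).trans (Finset.card_insert_le _ _)
      have hpm : p m := by
        by_contra hpm
        have : (Finset.range (m+1)).filter p = (Finset.range m).filter p := by
          rw [Finset.range_add_one, Finset.filter_insert, if_neg hpm]
        have hcc := congrArg Finset.card this
        omega
      exact ⟨m, Nat.lt_succ_self m, hpm, by omega⟩

/-- **Geometric domination of the number of visits to `M₁`.**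
Let `(Y n)` be a time-homogeneous Markov chain on a countable state space `M`
with transition kernel `κ`, started at an arbitrary `x ∈ M`.  Let `M₀, M₁` be
disjoint subsets such that every state of `M₀` is absorbing and
`κ(y)(M₀) ≥ p₀ > 0` for every `y ∈ M₁`.  Let
`N = ∑_{i ≥ 1} 1{Y (i-1) ∈ M₁} = ∑_{i ≥ 0} 1{Y i ∈ M₁}` be the total number
of times the chain is in `M₁`.  Then `P(N > k) ≤ (1 - p₀) ^ k` for every
`k ≥ 1`; in particular `N` is stochastically dominated by a geometric random
variable with success probability `p₀`. -/
theorem visits_to_M₁_geometric_tail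
    {Ω : Type*} [MeasurableSpace Ω] {μ : Measure Ω} [IsProbabilityMeasure μ]
    {M : Type*} [Countable M] [MeasurableSpace M] [MeasurableSingletonClass M]
    (κ : Kernel M M) [IsMarkovKernel κ]
    (Y : ℕ → Ω → M) (hYmeas : ∀ n, Measurable (Y n))
    -- (Y n) is a Markov chain with transition kernel κ :
    (hMarkov : ∀ (f : M → ℝ), (∃ C, ∀ y, |f y| ≤ C) → ∀ n : ℕ,
      μ[(fun ω => f (Y (n + 1) ω)) |
          ⨆ k ∈ Finset.range (n + 1), MeasurableSpace.comap (Y k) inferInstance]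
        =ᵐ[μ] fun ω => ∫ y, f y ∂(κ (Y n ω)))
    (M₀ M₁ : Set M) (hdisj : Disjoint M₀ M₁)
    -- every state of M₀ is absorbing :
    (habs : ∀ y ∈ M₀, κ y {y} = 1)
    (p₀ : ℝ) (hp₀ : 0 < p₀)
    (hhit : ∀ y ∈ M₁, ENNReal.ofReal p₀ ≤ κ y M₀)
    -- the chain starts at an arbitrary point x :
    (x : M) (hY0 : ∀ᵐ ω ∂μ, Y 0 ω = x)
    (k : ℕ) (hk : 1 ≤ k) :
    μ {ω | (k : ℝ≥0∞) < ∑' i : ℕ, (if Y i ω ∈ M₁ then (1 : ℝ≥0∞) else 0)}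
      ≤ ENNReal.ofReal ((1 - p₀) ^ k) := by
  rcases le_or_gt p₀ 1 with hp1 | hp1
  swap
  · -- M₁ is empty, so the event is empty
    have hM₁ : M₁ = ∅ := by
      by_contra h
      obtain ⟨y, hy⟩ := Set.nonempty_iff_ne_empty.2 h
      have h1 : ENNReal.ofReal p₀ ≤ 1 := (hhit y hy).trans prob_le_one
      rw [ENNReal.ofReal_le_one] at h1
      linarith
    have hempty : {ω | (k : ℝ≥0∞) < ∑' i : ℕ, (if Y i ω ∈ M₁ then (1 : ℝ≥0∞) else 0)} = ∅ := by
      ext ω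
      simp only [Set.mem_setOf_eq, Set.mem_empty_iff_false, iff_false, hM₁,
        Set.mem_empty_iff_false, if_false, tsum_zero, not_lt]
      exact zero_le
    rw [hempty]
    simp
  -- Main case : p₀ ≤ 1
  have hMmeas : ∀ s : Set M, MeasurableSet s := fun s => s.to_countable.measurableSet
  set F : ℕ → MeasurableSpace Ω := fun n =>
    ⨆ k ∈ Finset.range (n + 1), MeasurableSpace.comap (Y k) inferInstance with hFdef
  have hFle : ∀ n, F n ≤ ‹MeasurableSpace Ω› := fun n =>
    iSup₂_le fun k _ => (hYmeas k).comap_le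
  have hYset : ∀ {n j : ℕ}, j ≤ n → ∀ s : Set M, MeasurableSet[F n] (Y j ⁻¹' s) := by
    intro n j hj s
    have h1 : MeasurableSpace.comap (Y j) inferInstance ≤ F n :=
      le_iSup₂ (f := fun (i : ℕ) (_ : i ∈ Finset.range (n + 1)) =>
        MeasurableSpace.comap (Y i) inferInstance) j (Finset.mem_range.2 (Nat.lt_succ_of_le hj))
    exact h1 _ ⟨s, hMmeas s, rfl⟩
  have hFmono : ∀ n, F n ≤ F (n + 1) := by
    intro n
    refine iSup₂_le fun i hi => ?_
    refine le_iSup₂ (f := fun (i : ℕ) (_ : i ∈ Finset.range (n + 2)) =>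
      MeasurableSpace.comap (Y i) inferInstance) i ?_
    simp only [Finset.mem_range] at hi ⊢
    omega
  -- the basic integral identity from the Markov property
  have hint : ∀ (f : M → ℝ) (C : ℝ), (∀ y, |f y| ≤ C) → ∀ (n : ℕ) (A : Set Ω),
      MeasurableSet[F n] A →
      ∫ ω in A, f (Y (n+1) ω) ∂μ = ∫ ω in A, (∫ y, f y ∂(κ (Y n ω))) ∂μ := by
    intro f C hC n A hA
    have hfm : Measurable f := measurable_of_countable f
    have hg : Integrable (fun ω => f (Y (n+1) ω)) μ :=
      Integrable.mono' (integrable_const C) ((hfm.comp (hYmeas _)).aestronglyMeasurable)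
        (Filter.Eventually.of_forall fun ω => hC _)
    have hce := hMarkov f ⟨C, hC⟩ n
    calc ∫ ω in A, f (Y (n+1) ω) ∂μ
        = ∫ ω in A, (μ[(fun ω => f (Y (n + 1) ω)) | F n]) ω ∂μ :=
          (setIntegral_condExp (hFle n) hg hA).symm
      _ = ∫ ω in A, (∫ y, f y ∂(κ (Y n ω))) ∂μ :=
          integral_congr_ae (ae_restrict_of_ae hce)
  -- counting function
  set cnt : ℕ → Ω → ℕ := fun n ω => ((Finset.range n).filter (fun i => Y i ω ∈ M₁)).card
    with hcntdef
  have hstep : ∀ n ω, cnt (n+1) ω = cnt n ω + (if Y n ω ∈ M₁ then 1 else 0) := by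
    intro n ω
    simp only [hcntdef, Finset.range_add_one, Finset.filter_insert]
    split
    · rw [Finset.card_insert_of_notMem (by simp)]
    · simp
  have hmono : ∀ (ω : Ω) ⦃n n' : ℕ⦄, n ≤ n' → cnt n ω ≤ cnt n' ω := fun ω n n' h =>
    Finset.card_le_card (Finset.filter_subset_filter _ (Finset.range_subset_range.2 h))
  have hcntm : ∀ n, Measurable (cnt n) := by
    intro n
    induction n with
    | zero =>
      have : cnt 0 = fun _ => 0 := by funext ω; simp [hcntdef]
      rw [this]; exact measurable_const
    | succ n ih =>
      have : cnt (n+1) = fun ω => cnt n ω + (if Y n ω ∈ M₁ then 1 else 0) := by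
        funext ω; exact hstep n ω
      rw [this]
      exact ih.add (Measurable.ite (hYmeas n (hMmeas M₁)) measurable_const measurable_const)
  have hcntF : ∀ n j, MeasurableSet[F n] {ω | cnt n ω = j} := by
    intro n
    induction n with
    | zero =>
      intro j
      rcases Nat.eq_zero_or_pos j with rfl | hj
      · have : {ω | cnt 0 ω = 0} = Set.univ := by ext ω; simp [hcntdef]
        rw [this]; exact @MeasurableSet.univ Ω (F 0)
      · have : {ω | cnt 0 ω = j} = ∅ := by ext ω; simp [hcntdef]; omega
        rw [this]; exact @MeasurableSet.empty Ω (F 0)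
    | succ n ih =>
      intro j
      rcases Nat.eq_zero_or_pos j with rfl | hj
      · have hset : {ω | cnt (n+1) ω = 0} = {ω | cnt n ω = 0} ∩ (Y n ⁻¹' M₁)ᶜ := by
          ext ω
          simp only [Set.mem_setOf_eq, Set.mem_inter_iff, Set.mem_compl_iff, Set.mem_preimage,
            hstep n ω]
          by_cases h : Y n ω ∈ M₁ <;> simp [h]
        rw [hset]
        exact (hFmono n _ (ih 0)).inter (hYset (Nat.le_succ n) M₁).compl
      · have hset : {ω | cnt (n+1) ω = j} =
            ({ω | cnt n ω = j} ∩ (Y n ⁻¹' M₁)ᶜ) ∪ ({ω | cnt n ω = j - 1} ∩ Y n ⁻¹' M₁) := by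
          ext ω
          simp only [Set.mem_setOf_eq, Set.mem_union, Set.mem_inter_iff, Set.mem_compl_iff,
            Set.mem_preimage, hstep n ω]
          by_cases h : Y n ω ∈ M₁ <;> simp [h] <;> omega
        rw [hset]
        exact ((hFmono n _ (ih j)).inter (hYset (Nat.le_succ n) M₁).compl).union
          ((hFmono n _ (ih (j-1))).inter (hYset (Nat.le_succ n) M₁))
  -- the events "(j+1)-st visit happens at time n"
  set E : ℕ → ℕ → Set Ω := fun j n => {ω | Y n ω ∈ M₁ ∧ cnt n ω = j} with hEdef
  have hEeq : ∀ j n, E j n = Y n ⁻¹' M₁ ∩ {ω | cnt n ω = j} := by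
    intro j n; ext ω; simp [hEdef, Set.mem_preimage]
  have hEF : ∀ j n, MeasurableSet[F n] (E j n) := by
    intro j n
    rw [hEeq]
    exact (hYset le_rfl M₁).inter (hcntF n j)
  have hEmeas : ∀ j n, MeasurableSet (E j n) := fun j n => hFle n _ (hEF j n)
  have hdisjE : ∀ j, Pairwise (Function.onFun Disjoint fun n => E j n) := by
    intro j
    have key : ∀ a b : ℕ, a < b → Disjoint (E j a) (E j b) := by
      intro a b hab
      rw [Set.disjoint_left]
      rintro ω ⟨h1, h2⟩ ⟨h3, h4⟩
      have h5 : cnt (a+1) ω = j + 1 := by rw [hstep]; simp [h1, h2]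
      have h6 := hmono ω (show a+1 ≤ b by omega)
      omega
    intro a b hab
    rcases hab.lt_or_gt with h | h
    · exact key _ _ h
    · exact (key _ _ h).symm
  -- absorption : null event
  set Bad : Set Ω := ⋃ n, ⋃ y ∈ M₀, {ω | Y n ω = y ∧ Y (n+1) ω ≠ y} with hBaddef
  have habs0 : ∀ (n : ℕ), ∀ y ∈ M₀, μ {ω | Y n ω = y ∧ Y (n+1) ω ≠ y} = 0 := by
    intro n y hy
    set f : M → ℝ := Set.indicator {y} (fun _ => (1:ℝ)) with hfdef
    have hb : ∀ z, |f z| ≤ 1 := by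
      intro z
      simp only [hfdef, Set.indicator]
      split <;> norm_num
    have hid := hint f 1 hb n (Y n ⁻¹' {y}) (hYset le_rfl {y})
    have hL : ∫ ω in Y n ⁻¹' {y}, f (Y (n+1) ω) ∂μ
        = (μ (Y n ⁻¹' {y} ∩ Y (n+1) ⁻¹' {y})).toReal := by
      have h1 : (fun ω => f (Y (n+1) ω)) = Set.indicator (Y (n+1) ⁻¹' {y}) (fun _ => (1:ℝ)) := by
        funext ω
        simp only [hfdef, Set.indicator, Set.mem_preimage]
        convert rfl
      rw [h1, setIntegral_indicator ((hYmeas (n+1)) (hMmeas {y})), setIntegral_const]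
      simp [measureReal_def]
    have hR : ∫ ω in Y n ⁻¹' {y}, (∫ z, f z ∂(κ (Y n ω))) ∂μ
        = (μ (Y n ⁻¹' {y})).toReal := by
      rw [setIntegral_congr_fun ((hYmeas n) (hMmeas {y}))
        (g := fun _ => (1:ℝ)) ?_]
      · rw [setIntegral_const]; simp [measureReal_def]
      · intro ω hω
        have hωy : Y n ω = y := hω
        beta_reduce
        rw [integral_indicator_const _ (hMmeas {y}), hωy, measureReal_def, habs y hy]
        simp
    rw [hL, hR] at hid
    have hfin1 : μ (Y n ⁻¹' {y} ∩ Y (n+1) ⁻¹' {y}) ≠ ∞ := measure_ne_top _ _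
    have hfin2 : μ (Y n ⁻¹' {y}) ≠ ∞ := measure_ne_top _ _
    have heq : μ (Y n ⁻¹' {y} ∩ Y (n+1) ⁻¹' {y}) = μ (Y n ⁻¹' {y}) :=
      (ENNReal.toReal_eq_toReal_iff' hfin1 hfin2).1 hid
    have hsplit := measure_inter_add_diff (Y n ⁻¹' {y}) ((hYmeas (n+1)) (hMmeas {y}))
      (μ := μ) (t := Y (n+1) ⁻¹' {y})
    have hdiff : μ (Y n ⁻¹' {y} \ Y (n+1) ⁻¹' {y}) = 0 := by
      have h2 : μ (Y n ⁻¹' {y} ∩ Y (n+1) ⁻¹' {y}) + μ (Y n ⁻¹' {y} \ Y (n+1) ⁻¹' {y})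
          = μ (Y n ⁻¹' {y} ∩ Y (n+1) ⁻¹' {y}) + 0 := by
        rw [add_zero, hsplit]; exact heq.symm
      exact (ENNReal.add_right_inj hfin1).1 h2
    have hss : {ω | Y n ω = y ∧ Y (n+1) ω ≠ y} = Y n ⁻¹' {y} \ Y (n+1) ⁻¹' {y} := by
      ext ω; simp [Set.mem_diff, Set.mem_preimage]
    rw [hss]
    exact hdiff
  have hBad : μ Bad = 0 := by
    rw [hBaddef]
    refine measure_iUnion_null fun n => ?_
    exact (measure_biUnion_null_iff (Set.to_countable M₀)).2 fun y hy => habs0 n y hy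
  have habs' : ∀ ω, ω ∉ Bad → ∀ n m : ℕ, n ≤ m → Y n ω ∈ M₀ → Y m ω = Y n ω := by
    intro ω hω n m hnm hn
    induction m, hnm using Nat.le_induction with
    | base => rfl
    | succ m hm ih =>
      have h2 : Y m ω ∈ M₀ := ih ▸ hn
      have h3 : Y (m+1) ω = Y m ω := by
        by_contra hne
        exact hω (Set.mem_iUnion.2 ⟨m, Set.mem_iUnion₂.2 ⟨Y m ω, h2, rfl, hne⟩⟩)
      rw [h3, ih]
  -- key estimate
  have hkey : ∀ (n : ℕ) (A : Set Ω), MeasurableSet[F n] A → (∀ ω ∈ A, Y n ω ∈ M₁) →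
      μ (A \ Y (n+1) ⁻¹' M₀) ≤ ENNReal.ofReal (1 - p₀) * μ A := by
    intro n A hAF hAM
    have hA : MeasurableSet A := hFle n _ hAF
    set f : M → ℝ := Set.indicator M₀ (fun _ => (1:ℝ)) with hfdef
    have hb : ∀ z, |f z| ≤ 1 := by
      intro z
      simp only [hfdef, Set.indicator]
      split <;> norm_num
    have hid := hint f 1 hb n A hAF
    have hL : ∫ ω in A, f (Y (n+1) ω) ∂μ = (μ (A ∩ Y (n+1) ⁻¹' M₀)).toReal := by
      have h1 : (fun ω => f (Y (n+1) ω)) = Set.indicator (Y (n+1) ⁻¹' M₀) (fun _ => (1:ℝ)) := by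
        funext ω
        simp only [hfdef, Set.indicator, Set.mem_preimage]
      rw [h1, setIntegral_indicator ((hYmeas (n+1)) (hMmeas M₀)), setIntegral_const]
      simp [measureReal_def]
    have hRw : (fun ω => ∫ z, f z ∂(κ (Y n ω))) = fun ω => (κ (Y n ω) M₀).toReal := by
      funext ω
      rw [hfdef, integral_indicator_const _ (hMmeas M₀)]
      simp [measureReal_def]
    rw [hL, hRw] at hid
    have hRlow : p₀ * (μ A).toReal ≤ ∫ ω in A, (κ (Y n ω) M₀).toReal ∂μ := by
      have hglemma : ∀ ω ∈ A, p₀ ≤ (κ (Y n ω) M₀).toReal := by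
        intro ω hω
        calc p₀ = (ENNReal.ofReal p₀).toReal := (ENNReal.toReal_ofReal hp₀.le).symm
          _ ≤ (κ (Y n ω) M₀).toReal :=
            ENNReal.toReal_mono (measure_ne_top _ _) (hhit _ (hAM ω hω))
      have hgmeas : Measurable fun ω => (κ (Y n ω) M₀).toReal :=
        ((Kernel.measurable_coe κ (hMmeas M₀)).comp (hYmeas n)).ennreal_toReal
      have hgint : IntegrableOn (fun ω => (κ (Y n ω) M₀).toReal) A μ := by
        refine Integrable.integrableOn ?_
        refine Integrable.mono' (integrable_const 1) hgmeas.aestronglyMeasurable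
          (Filter.Eventually.of_forall fun ω => ?_)
        rw [Real.norm_eq_abs, abs_of_nonneg ENNReal.toReal_nonneg]
        exact ENNReal.toReal_le_of_le_ofReal one_pos.le (by simpa using prob_le_one)
      calc p₀ * (μ A).toReal = ∫ _ in A, p₀ ∂μ := by rw [setIntegral_const, smul_eq_mul, measureReal_def]; ring
        _ ≤ ∫ ω in A, (κ (Y n ω) M₀).toReal ∂μ :=
          setIntegral_mono_on (integrableOn_const (measure_lt_top μ A).ne)
            hgint hA hglemma
    have hlow : p₀ * (μ A).toReal ≤ (μ (A ∩ Y (n+1) ⁻¹' M₀)).toReal := hid ▸ hRlow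
    have hsplit := measure_inter_add_diff A ((hYmeas (n+1)) (hMmeas M₀))
      (μ := μ) (t := Y (n+1) ⁻¹' M₀)
    have hfinA : μ A ≠ ∞ := measure_ne_top _ _
    have hfinI : μ (A ∩ Y (n+1) ⁻¹' M₀) ≠ ∞ := measure_ne_top _ _
    have hfinD : μ (A \ Y (n+1) ⁻¹' M₀) ≠ ∞ := measure_ne_top _ _
    have htReal : (μ (A \ Y (n+1) ⁻¹' M₀)).toReal ≤ (1 - p₀) * (μ A).toReal := by
      have h1 : (μ (A ∩ Y (n+1) ⁻¹' M₀)).toReal + (μ (A \ Y (n+1) ⁻¹' M₀)).toReal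
          = (μ A).toReal := by
        rw [← ENNReal.toReal_add hfinI hfinD, hsplit]
      nlinarith [ENNReal.toReal_nonneg (a := μ A)]
    calc μ (A \ Y (n+1) ⁻¹' M₀)
        = ENNReal.ofReal ((μ (A \ Y (n+1) ⁻¹' M₀)).toReal) := (ENNReal.ofReal_toReal hfinD).symm
      _ ≤ ENNReal.ofReal ((1 - p₀) * (μ A).toReal) := ENNReal.ofReal_le_ofReal htReal
      _ = ENNReal.ofReal (1 - p₀) * ENNReal.ofReal ((μ A).toReal) :=
          ENNReal.ofReal_mul (by linarith)
      _ = ENNReal.ofReal (1 - p₀) * μ A := by rw [ENNReal.ofReal_toReal hfinA]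
  -- main induction
  have hmain : ∀ j : ℕ, μ (⋃ n, E j n) ≤ ENNReal.ofReal (1 - p₀) ^ j := by
    intro j
    induction j with
    | zero => simpa using prob_le_one
    | succ j ih =>
      have hsubset : (⋃ m, E (j+1) m) ⊆ Bad ∪ ⋃ n, (E j n \ Y (n+1) ⁻¹' M₀) := by
        intro ω hω
        obtain ⟨m, hm⟩ := Set.mem_iUnion.1 hω
        obtain ⟨h1, h2⟩ := hm
        by_cases hbad : ω ∈ Bad
        · exact Or.inl hbad
        · refine Or.inr ?_
          have hjlt : j < cnt m ω := by omega
          obtain ⟨n, hn, hpn, hcn⟩ := exists_nth_visit (fun i => Y i ω ∈ M₁) m j hjlt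
          refine Set.mem_iUnion.2 ⟨n, ⟨hpn, hcn⟩, ?_⟩
          intro hmem
          have habsm : Y m ω = Y (n+1) ω := habs' ω hbad (n+1) m (by omega) hmem
          exact Set.disjoint_left.1 hdisj (habsm ▸ hmem) h1
      calc μ (⋃ m, E (j+1) m)
          ≤ μ Bad + μ (⋃ n, (E j n \ Y (n+1) ⁻¹' M₀)) :=
            (measure_mono hsubset).trans (measure_union_le _ _)
        _ = μ (⋃ n, (E j n \ Y (n+1) ⁻¹' M₀)) := by rw [hBad, zero_add]
        _ ≤ ∑' n, μ (E j n \ Y (n+1) ⁻¹' M₀) := measure_iUnion_le _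
        _ ≤ ∑' n, ENNReal.ofReal (1 - p₀) * μ (E j n) := by
            refine ENNReal.tsum_le_tsum fun n => ?_
            exact hkey n (E j n) (hEF j n) (fun ω hω => hω.1)
        _ = ENNReal.ofReal (1 - p₀) * ∑' n, μ (E j n) := ENNReal.tsum_mul_left
        _ = ENNReal.ofReal (1 - p₀) * μ (⋃ n, E j n) := by
            rw [measure_iUnion (hdisjE j) (hEmeas j)]
        _ ≤ ENNReal.ofReal (1 - p₀) * ENNReal.ofReal (1 - p₀) ^ j :=
            mul_le_mul_right ih _
        _ = ENNReal.ofReal (1 - p₀) ^ (j + 1) := by ring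
  -- conclusion
  have hsub2 : {ω | (k : ℝ≥0∞) < ∑' i : ℕ, (if Y i ω ∈ M₁ then (1 : ℝ≥0∞) else 0)}
      ⊆ ⋃ n, E k n := by
    intro ω hω
    have hω' : (k : ℝ≥0∞) < ∑' i : ℕ, (if Y i ω ∈ M₁ then (1 : ℝ≥0∞) else 0) := hω
    rw [ENNReal.tsum_eq_iSup_sum, lt_iSup_iff] at hω'
    obtain ⟨s, hs⟩ := hω'
    set m := s.sup id + 1 with hmdef
    have hsub3 : s ⊆ Finset.range m :=
      fun i hi => Finset.mem_range.2 (Nat.lt_succ_of_le (Finset.le_sup (f := id) hi))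
    have hle2 : (∑ i ∈ s, (if Y i ω ∈ M₁ then (1 : ℝ≥0∞) else 0))
        ≤ ∑ i ∈ Finset.range m, (if Y i ω ∈ M₁ then (1 : ℝ≥0∞) else 0) :=
      Finset.sum_le_sum_of_subset hsub3
    have hsum : (∑ i ∈ Finset.range m, (if Y i ω ∈ M₁ then (1 : ℝ≥0∞) else 0))
        = (cnt m ω : ℝ≥0∞) := by
      rw [Finset.sum_boole]
    have hklt : k < cnt m ω := by
      have := lt_of_lt_of_le hs (hle2.trans hsum.le)
      exact_mod_cast this
    obtain ⟨n, hn, hpn, hcn⟩ := exists_nth_visit (fun i => Y i ω ∈ M₁) m k hklt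
    exact Set.mem_iUnion.2 ⟨n, hpn, hcn⟩
  calc μ {ω | (k : ℝ≥0∞) < ∑' i : ℕ, (if Y i ω ∈ M₁ then (1 : ℝ≥0∞) else 0)}
      ≤ μ (⋃ n, E k n) := measure_mono hsub2
    _ ≤ ENNReal.ofReal (1 - p₀) ^ k := hmain k
    _ = ENNReal.ofReal ((1 - p₀) ^ k) := (ENNReal.ofReal_pow (by linarith) k).symm
end

section
/- Let S = {(u,v) ∈ ℤ × ℤ : u ≥ 0, v ≥ 0} and S₀ = {(u,v) ∈ S : uv = 0}. Let (X_n)_{n≥0} be a time-homogeneous Markov chain on S with transition kernel κ, and write X_n = (X_n(1), X_n(2)). Suppose there exist a subset S₁ ⊆ S \ S₀, constants d₁, d₂ > 0 and p₀ > 0 such that: (a) for all (l,m) ∉ S₀, E[X_1(1)X_1(2) − X_0(1)X_0(2) | X_0 = (l,m)] ≤ −d₁ + d₂·1{(l,m) ∈ S₁}; and (b) for all (l,m) ∈ S₁, κ((l,m))(S₀) ≥ p₀. Then for every starting point (u,v) ∈ S \ S₀, the first entrance time τ(S₀) := inf{n ≥ 1 : X_n ∈ S₀} of the chain started at (u,v)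 satisfies E[τ(S₀)] ≤ uv/d₁ + d₂/(d₁ p₀). -/
open MeasureTheory ProbabilityTheory
open scoped ENNReal Classical

/-- The quadrant `S = {(u,v) ∈ ℤ × ℤ : u ≥ 0, v ≥ 0}`. -/
def quadrantS : Set (ℤ × ℤ) := {p | 0 ≤ p.1 ∧ 0 ≤ p.2}

/-- The boundary `S₀ = {(u,v) ∈ S : u v = 0}`. -/
def quadrantS₀ : Set (ℤ × ℤ) := {p | 0 ≤ p.1 ∧ 0 ≤ p.2 ∧ p.1 * p.2 = 0}

private lemma measurable_of_discreteZZ {β : Type*} [MeasurableSpace β] (f : ℤ × ℤ → β) :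
    Measurable f := fun _ _ => (Set.to_countable _).measurableSet

private lemma integrable_of_bdd {α : Type*} [MeasurableSpace α] {ν : Measure α}
    [IsFiniteMeasure ν] {f : α → ℝ} {C : ℝ} (hm : Measurable f) (h : ∀ a, |f a| ≤ C) :
    Integrable f ν :=
  ⟨hm.aestronglyMeasurable,
    HasFiniteIntegral.of_bounded (C := C) (ae_of_all _ fun a => by
      rw [Real.norm_eq_abs]; exact h a)⟩

/-- pointwise bound of the hitting time by the sum of indicators of survival events -/
private lemma tau_le_indicator_sum {Ω : Type*} (X : ℕ → Ω → ℤ × ℤ) (ω : Ω) :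
    (⨅ (n : ℕ) (_ : 1 ≤ n ∧ X n ω ∈ quadrantS₀), (n : ℝ≥0∞))
      ≤ ∑' n : ℕ,
        ({ω' | ∀ k, 1 ≤ k → k ≤ n → X k ω' ∉ quadrantS₀} : Set Ω).indicator
          (fun _ => (1 : ℝ≥0∞)) ω := by
  by_cases h : ∃ n, 1 ≤ n ∧ X n ω ∈ quadrantS₀
  · have hN := Nat.find_spec h
    set N := Nat.find h with hNdef
    have h1 : (⨅ (n : ℕ) (_ : 1 ≤ n ∧ X n ω ∈ quadrantS₀), (n : ℝ≥0∞)) ≤ (N : ℝ≥0∞) :=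
      iInf_le_of_le N (iInf_le _ hN)
    refine h1.trans ?_
    have h2 : ∀ m ∈ Finset.range N,
        ({ω' | ∀ k, 1 ≤ k → k ≤ m → X k ω' ∉ quadrantS₀} : Set Ω).indicator
          (fun _ => (1 : ℝ≥0∞)) ω = 1 := by
      intro m hm
      rw [Finset.mem_range] at hm
      refine Set.indicator_of_mem ?_ _
      intro k hk1 hk2 hkS
      have : N ≤ k := Nat.find_le ⟨hk1, hkS⟩
      omega
    calc (N : ℝ≥0∞) = ∑ m ∈ Finset.range N,
          ({ω' | ∀ k, 1 ≤ k → k ≤ m → X k ω' ∉ quadrantS₀} : Set Ω).indicator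
            (fun _ => (1 : ℝ≥0∞)) ω := by
          rw [Finset.sum_congr rfl h2]; simp
      _ ≤ _ := ENNReal.sum_le_tsum _
  · push_neg at h
    have h2 : ∀ n : ℕ,
        ({ω' | ∀ k, 1 ≤ k → k ≤ n → X k ω' ∉ quadrantS₀} : Set Ω).indicator
          (fun _ => (1 : ℝ≥0∞)) ω = 1 := by
      intro n
      refine Set.indicator_of_mem ?_ _
      intro k hk1 _
      exact h k hk1
    have : ∑' n : ℕ,
        ({ω' | ∀ k, 1 ≤ k → k ≤ n → X k ω' ∉ quadrantS₀} : Set Ω).indicator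
          (fun _ => (1 : ℝ≥0∞)) ω = ⊤ := by
      rw [tsum_congr h2]
      exact ENNReal.tsum_const_eq_top_of_ne_zero one_ne_zero
    rw [this]
    exact le_top
/-- **Proposition 3.2 (bound on the expected first collision time).**
Let `(X n)` be a time-homogeneous Markov chain on
`S = {(u,v) ∈ ℤ × ℤ : u, v ≥ 0}` with transition kernel `κ`, and let
`S₀ = {(u,v) ∈ S : uv = 0}`.  Suppose there are `S₁ ⊆ S \ S₀` and constants
`d₁, d₂, p₀ > 0` such that
(a) `E[X₁(1)X₁(2) - X₀(1)X₀(2) | X₀ = (l,m)] ≤ -d₁ + d₂·1{(l,m) ∈ S₁}`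
for all `(l,m) ∈ S \ S₀`, and
(b) `κ((l,m))(S₀) ≥ p₀` for all `(l,m) ∈ S₁`.
Then for the chain started at `(u,v) ∈ S \ S₀`, the entrance time
`τ(S₀) = inf {n ≥ 1 : X n ∈ S₀}` satisfies
`E[τ(S₀)] ≤ uv / d₁ + d₂ / (d₁ p₀)`. -/
theorem collision_time_expectation_le
    {Ω : Type*} [MeasurableSpace Ω] {μ : Measure Ω} [IsProbabilityMeasure μ]
    (κ : Kernel (ℤ × ℤ) (ℤ × ℤ)) [IsMarkovKernel κ]
    (X : ℕ → Ω → ℤ × ℤ) (hXmeas : ∀ n, Measurable (X n))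
    -- (X n) is a Markov chain with transition kernel κ :
    (hMarkov : ∀ (f : ℤ × ℤ → ℝ), (∃ C, ∀ p, |f p| ≤ C) → ∀ n : ℕ,
      μ[(fun ω => f (X (n + 1) ω)) |
          ⨆ k ∈ Finset.range (n + 1), MeasurableSpace.comap (X k) inferInstance]
        =ᵐ[μ] fun ω => ∫ p, f p ∂(κ (X n ω)))
    -- the chain lives on S :
    (hXS : ∀ n, ∀ᵐ ω ∂μ, X n ω ∈ quadrantS)
    (hκS : ∀ p ∈ quadrantS, κ p quadrantS = 1)
    (S₁ : Set (ℤ × ℤ)) (hS₁ : S₁ ⊆ quadrantS \ quadrantS₀)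
    (d₁ d₂ p₀ : ℝ) (hd₁ : 0 < d₁) (hd₂ : 0 < d₂) (hp₀ : 0 < p₀)
    (hint : ∀ p ∈ quadrantS, Integrable (fun q : ℤ × ℤ => (q.1 : ℝ) * (q.2 : ℝ)) (κ p))
    -- condition (a) :
    (ha : ∀ p ∈ quadrantS \ quadrantS₀,
      (∫ q : ℤ × ℤ, (q.1 : ℝ) * (q.2 : ℝ) ∂(κ p)) - (p.1 : ℝ) * (p.2 : ℝ)
        ≤ -d₁ + (if p ∈ S₁ then d₂ else 0))
    -- condition (b) :
    (hb : ∀ p ∈ S₁, ENNReal.ofReal p₀ ≤ κ p quadrantS₀)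
    (u v : ℤ) (huv : ((u, v) : ℤ × ℤ) ∈ quadrantS \ quadrantS₀)
    -- the chain starts at (u, v) :
    (hX0 : ∀ᵐ ω ∂μ, X 0 ω = (u, v)) :
    ∫⁻ ω, (⨅ (n : ℕ) (_ : 1 ≤ n ∧ X n ω ∈ quadrantS₀), (n : ℝ≥0∞)) ∂μ
      ≤ ENNReal.ofReal ((u : ℝ) * (v : ℝ) / d₁ + d₂ / (d₁ * p₀)) := by
  classical
  -- basic measurability facts
  have hS₀meas : MeasurableSet quadrantS₀ := (Set.to_countable _).measurableSet
  have hS₁meas : MeasurableSet S₁ := (Set.to_countable _).measurableSet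
  have hSmeas : MeasurableSet quadrantS := (Set.to_countable _).measurableSet
  -- the survival events
  set A : ℕ → Set Ω := fun n => {ω | ∀ k, 1 ≤ k → k ≤ n → X k ω ∉ quadrantS₀} with hA
  have hAmeas : ∀ n, MeasurableSet (A n) := by
    intro n
    have : A n = ⋂ k ∈ Finset.Icc 1 n, X k ⁻¹' quadrantS₀ᶜ := by
      ext ω
      simp only [hA, Set.mem_setOf_eq, Set.mem_iInter, Finset.mem_Icc, Set.mem_preimage,
        Set.mem_compl_iff]
      exact ⟨fun h k hk => h k hk.1 hk.2, fun h k h1 h2 => h k ⟨h1, h2⟩⟩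
    rw [this]
    exact Finset.measurableSet_biInter _ fun k _ => (hXmeas k) hS₀meas.compl
  have hAmono : ∀ n, A (n + 1) ⊆ A n := by
    intro n ω hω k h1 h2
    exact hω k h1 (h2.trans (Nat.le_succ n))
  have hAsucc : ∀ n, A (n + 1) = A n ∩ X (n + 1) ⁻¹' quadrantS₀ᶜ := by
    intro n
    ext ω
    simp only [hA, Set.mem_setOf_eq, Set.mem_inter_iff, Set.mem_preimage, Set.mem_compl_iff]
    constructor
    · intro h
      exact ⟨fun k h1 h2 => h k h1 (h2.trans (Nat.le_succ n)), h (n + 1) (by omega) le_rfl⟩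
    · rintro ⟨h1, h2⟩ k hk1 hk2
      rcases Nat.lt_or_ge k (n + 1) with hk | hk
      · exact h1 k hk1 (by omega)
      · have : k = n + 1 := by omega
        rw [this]; exact h2
  have hA0 : A 0 = Set.univ := by
    ext ω; simp only [hA, Set.mem_setOf_eq, Set.mem_univ, iff_true]
    intro k h1 h2; omega
  -- the filtration
  set F : ℕ → MeasurableSpace Ω :=
    fun n => ⨆ k ∈ Finset.range (n + 1), MeasurableSpace.comap (X k) inferInstance with hF
  have hFle : ∀ n, F n ≤ ‹MeasurableSpace Ω› := by
    intro n
    refine iSup_le fun k => iSup_le fun _ => ?_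
    exact (hXmeas k).comap_le
  have hAF : ∀ n, MeasurableSet[F n] (A n) := by
    intro n
    have heq : A n = ⋂ k ∈ Finset.Icc 1 n, X k ⁻¹' quadrantS₀ᶜ := by
      ext ω
      simp only [hA, Set.mem_setOf_eq, Set.mem_iInter, Finset.mem_Icc, Set.mem_preimage,
        Set.mem_compl_iff]
      exact ⟨fun h k hk => h k hk.1 hk.2, fun h k h1 h2 => h k ⟨h1, h2⟩⟩
    rw [heq]
    refine Finset.measurableSet_biInter _ fun k hk => ?_
    rw [Finset.mem_Icc] at hk
    have hle : MeasurableSpace.comap (X k) inferInstance ≤ F n :=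
      le_iSup₂ (f := fun k (_ : k ∈ Finset.range (n + 1)) =>
        MeasurableSpace.comap (X k) inferInstance) k (Finset.mem_range.mpr (by omega))
    exact hle _ ⟨quadrantS₀ᶜ, hS₀meas.compl, rfl⟩
  -- key consequence of the Markov property
  have hkey : ∀ (n : ℕ) (f : ℤ × ℤ → ℝ) (C : ℝ), (∀ p, |f p| ≤ C) →
      (∫ ω in A n, f (X (n + 1) ω) ∂μ)
        = ∫ ω in A n, (∫ p, f p ∂(κ (X n ω))) ∂μ := by
    intro n f C hC
    have hf_int : Integrable (fun ω => f (X (n + 1) ω)) μ :=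
      integrable_of_bdd ((measurable_of_discreteZZ f).comp (hXmeas (n + 1))) fun ω => hC _
    have h2 := setIntegral_condExp (hFle n) hf_int (hAF n)
    rw [← h2]
    exact setIntegral_congr_ae (hAmeas n) ((hMarkov f ⟨C, hC⟩ n).mono fun ω hω _ => hω)
  -- notation for the quantities in the drift argument
  set Y : ℕ → Ω → ℝ := fun n ω => ((X n ω).1 : ℝ) * ((X n ω).2 : ℝ) with hYdef
  have hYmeas : ∀ n, Measurable (Y n) :=
    fun n => (measurable_of_discreteZZ fun p : ℤ × ℤ => (p.1 : ℝ) * (p.2 : ℝ)).comp (hXmeas n)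
  have hYnn : ∀ n, ∀ᵐ ω ∂μ, 0 ≤ Y n ω := by
    intro n
    filter_upwards [hXS n] with ω hω
    exact mul_nonneg (by exact_mod_cast hω.1) (by exact_mod_cast hω.2)
  set g : ℕ → ℝ := fun n => ∫ ω in A n, Y n ω ∂μ with hgdef
  set q : ℕ → ℝ := fun n => (μ (A n)).toReal with hqdef
  set s : ℕ → ℝ := fun n => (μ (A n ∩ X n ⁻¹' S₁)).toReal with hsdef
  -- a.e. membership facts on A n
  have hAe : ∀ n, ∀ᵐ ω ∂μ, ω ∈ A n → X n ω ∈ quadrantS \ quadrantS₀ := by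
    intro n
    match n with
    | 0 =>
      filter_upwards [hXS 0, hX0] with ω h1 h2 _
      exact ⟨h1, by rw [h2]; exact huv.2⟩
    | (m + 1) =>
      filter_upwards [hXS (m + 1)] with ω h1 hmem
      exact ⟨h1, hmem (m + 1) (by omega) le_rfl⟩
  -- STEP A : the drift recursion
  have stepA : ∀ n : ℕ, IntegrableOn (Y n) (A n) μ →
      IntegrableOn (Y (n + 1)) (A (n + 1)) μ ∧
        g (n + 1) ≤ g n - d₁ * q n + d₂ * s n := by
    intro n hIntn
    set fM : ℕ → ℤ × ℤ → ℝ := fun M p => min (max ((p.1 : ℝ) * (p.2 : ℝ)) 0) M with hfM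
    have hfMnn : ∀ M p, 0 ≤ fM M p := fun M p =>
      le_min (le_max_right _ _) (Nat.cast_nonneg M)
    have hfMbd : ∀ M p, |fM M p| ≤ (M : ℝ) := fun M p => by
      rw [abs_of_nonneg (hfMnn M p)]; exact min_le_right _ _
    set R : ℝ := g n - d₁ * q n + d₂ * s n with hR
    -- the conditional drift bound, for each truncation level M
    have hdrift : ∀ M : ℕ, (∫ ω in A n, fM M (X (n + 1) ω) ∂μ) ≤ R := by
      intro M
      rw [hkey n (fM M) M (hfMbd M)]
      have hptwise : ∀ᵐ ω ∂μ, ω ∈ A n →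
          (∫ p, fM M p ∂(κ (X n ω)))
            ≤ Y n ω - d₁ + d₂ * S₁.indicator (fun _ => (1 : ℝ)) (X n ω) := by
        filter_upwards [hAe n] with ω hω hmem
        obtain ⟨hpS, hpS₀⟩ := hω hmem
        have hκae : ∀ᵐ qq ∂(κ (X n ω)), qq ∈ quadrantS := by
          have h1 : κ (X n ω) quadrantS = 1 := hκS _ hpS
          have h2 := measure_compl hSmeas (by rw [h1]; exact ENNReal.one_ne_top)
          rw [measure_univ, h1, tsub_self] at h2
          rw [ae_iff]
          simpa [Set.compl_def] using h2
        have hmono : (∫ qq, fM M qq ∂(κ (X n ω)))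
            ≤ ∫ qq : ℤ × ℤ, (qq.1 : ℝ) * (qq.2 : ℝ) ∂(κ (X n ω)) := by
          refine integral_mono_ae
            (integrable_of_bdd (measurable_of_discreteZZ _) (hfMbd M)) (hint _ hpS) ?_
          filter_upwards [hκae] with qq hqq
          have hnn : 0 ≤ (qq.1 : ℝ) * (qq.2 : ℝ) :=
            mul_nonneg (by exact_mod_cast hqq.1) (by exact_mod_cast hqq.2)
          calc fM M qq ≤ max ((qq.1 : ℝ) * (qq.2 : ℝ)) 0 := min_le_left _ _
            _ = _ := max_eq_left hnn
        have hha := ha _ ⟨hpS, hpS₀⟩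
        have hind : (if X n ω ∈ S₁ then d₂ else 0)
            = d₂ * S₁.indicator (fun _ => (1 : ℝ)) (X n ω) := by
          by_cases hp1 : X n ω ∈ S₁ <;> simp [hp1]
        rw [hind] at hha
        have hYeq : Y n ω = ((X n ω).1 : ℝ) * ((X n ω).2 : ℝ) := rfl
        rw [hYeq]
        linarith [hmono, hha]
      have hIntL : IntegrableOn (fun ω => ∫ p, fM M p ∂(κ (X n ω))) (A n) μ := by
        have hmL : Measurable (fun ω => ∫ p, fM M p ∂(κ (X n ω))) := by
          exact (measurable_of_discreteZZ
            (fun p' : ℤ × ℤ => ∫ p, fM M p ∂(κ p'))).comp (hXmeas n)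
        refine integrable_of_bdd (C := (M : ℝ)) hmL fun ω => ?_
        rw [abs_of_nonneg (integral_nonneg (fun p => hfMnn M p))]
        calc (∫ p, fM M p ∂(κ (X n ω)))
            ≤ ∫ _, (M : ℝ) ∂(κ (X n ω)) :=
              integral_mono (integrable_of_bdd (measurable_of_discreteZZ _) (hfMbd M))
                (integrable_const _) (fun p => min_le_right _ _)
          _ = (M : ℝ) := by simp
      have hIndInt : IntegrableOn
          (fun ω => d₂ * S₁.indicator (fun _ => (1 : ℝ)) (X n ω)) (A n) μ := by
        have hmI : Measurable (fun ω => d₂ * S₁.indicator (fun _ => (1 : ℝ)) (X n ω)) := by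
          exact (measurable_of_discreteZZ
            (fun p : ℤ × ℤ => d₂ * S₁.indicator (fun _ => (1 : ℝ)) p)).comp (hXmeas n)
        refine integrable_of_bdd (C := d₂) hmI fun ω => ?_
        by_cases hm : X n ω ∈ S₁ <;> simp [hm, abs_of_pos hd₂, hd₂.le]
      have hsub : IntegrableOn (fun ω => Y n ω - d₁) (A n) μ :=
        hIntn.sub (integrable_const d₁)
      have hIntR : IntegrableOn
          (fun ω => Y n ω - d₁ + d₂ * S₁.indicator (fun _ => (1 : ℝ)) (X n ω)) (A n) μ :=
        hsub.add hIndInt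
      have h8 := setIntegral_mono_on_ae hIntL hIntR (hAmeas n) hptwise
      refine h8.trans ?_
      rw [integral_add hsub hIndInt,
        integral_sub hIntn (integrable_const d₁), setIntegral_const]
      have h9 : ∫ ω in A n, d₂ * S₁.indicator (fun _ => (1 : ℝ)) (X n ω) ∂μ = d₂ * s n := by
        have heq : (fun ω => d₂ * S₁.indicator (fun _ => (1 : ℝ)) (X n ω))
            = (X n ⁻¹' S₁).indicator (fun _ => d₂) := by
          funext ω
          simp only [Set.indicator_apply, Set.mem_preimage, mul_ite, mul_one, mul_zero]
        rw [heq, setIntegral_indicator ((hXmeas n) hS₁meas), setIntegral_const]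
        simp only [hsdef, smul_eq_mul, measureReal_def]
        ring
      rw [h9, hR]
      simp only [hgdef, hqdef, smul_eq_mul, measureReal_def]
      ring_nf
      linarith
    -- nonnegativity of R
    have hR0 : 0 ≤ R := by
      have h0 := hdrift 0
      have hz : (∫ ω in A n, fM 0 (X (n + 1) ω) ∂μ) = 0 := by
        have hzz : ∀ ω, fM 0 (X (n + 1) ω) = 0 := fun ω => by
          simp only [hfM, Nat.cast_zero]
          exact min_eq_right (le_max_right _ _)
        simp [hzz]
      linarith
    -- monotone convergence in the truncation level
    have hsup : ∫⁻ ω in A n, ENNReal.ofReal (Y (n + 1) ω) ∂μ ≤ ENNReal.ofReal R := by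
      have hae' : ∀ᵐ ω ∂(μ.restrict (A n)),
          ENNReal.ofReal (Y (n + 1) ω)
            = ⨆ M : ℕ, ENNReal.ofReal (fM M (X (n + 1) ω)) := by
        filter_upwards [ae_restrict_of_ae (hYnn (n + 1))] with ω hω
        have hmax : max (Y (n + 1) ω) 0 = Y (n + 1) ω := max_eq_left hω
        refine le_antisymm ?_ (iSup_le fun M => ENNReal.ofReal_le_ofReal ?_)
        · refine le_iSup_of_le ⌈Y (n + 1) ω⌉₊ (le_of_eq (congrArg _ ?_))
          show Y (n + 1) ω = min (max (Y (n + 1) ω) 0) ((⌈Y (n + 1) ω⌉₊ : ℝ))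
          rw [hmax, min_eq_left (Nat.le_ceil _)]
        · show min (max (Y (n + 1) ω) 0) ((M : ℝ)) ≤ Y (n + 1) ω
          rw [hmax]
          exact min_le_left _ _
      have hmeasM : ∀ M : ℕ, Measurable (fun ω => ENNReal.ofReal (fM M (X (n + 1) ω))) := by
        intro M
        exact ENNReal.measurable_ofReal.comp
          ((measurable_of_discreteZZ (fM M)).comp (hXmeas (n + 1)))
      have hmono' : Monotone (fun (M : ℕ) (ω : Ω) => ENNReal.ofReal (fM M (X (n + 1) ω))) := by
        intro a b hab ω
        exact ENNReal.ofReal_le_ofReal (min_le_min (le_refl _) (by exact_mod_cast hab))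
      rw [lintegral_congr_ae hae', lintegral_iSup hmeasM hmono']
      refine iSup_le fun M => ?_
      have hintM : Integrable (fun ω => fM M (X (n + 1) ω)) (μ.restrict (A n)) := by
        refine integrable_of_bdd ?_ (fun ω => hfMbd M _)
        exact (measurable_of_discreteZZ (fM M)).comp (hXmeas (n + 1))
      rw [← ofReal_integral_eq_lintegral_ofReal hintM (ae_of_all _ fun ω => hfMnn M _)]
      exact ENNReal.ofReal_le_ofReal (hdrift M)
    have hIntOn : IntegrableOn (Y (n + 1)) (A n) μ := by
      refine ⟨(hYmeas (n + 1)).aestronglyMeasurable, ?_⟩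
      rw [hasFiniteIntegral_iff_ofReal (ae_restrict_of_ae (hYnn (n + 1)))]
      exact lt_of_le_of_lt hsup ENNReal.ofReal_lt_top
    refine ⟨hIntOn.mono_set (hAmono n), ?_⟩
    have h10 : g (n + 1) ≤ ∫ ω in A n, Y (n + 1) ω ∂μ := by
      simp only [hgdef]
      exact setIntegral_mono_set hIntOn (ae_restrict_of_ae (hYnn (n + 1)))
        ((hAmono n).eventuallyLE)
    refine h10.trans ?_
    rw [integral_eq_lintegral_of_nonneg_ae (ae_restrict_of_ae (hYnn (n + 1)))
      (hYmeas (n + 1)).aestronglyMeasurable]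
    exact ENNReal.toReal_le_of_le_ofReal hR0 hsup
  -- STEP B : the geometric bound
  have stepB : ∀ n : ℕ, p₀ * s n ≤ q n - q (n + 1) := by
    intro n
    set B : Set Ω := X (n + 1) ⁻¹' quadrantS₀ with hBdef
    have hBmeas : MeasurableSet B := (hXmeas (n + 1)) hS₀meas
    have h1 : μ (A n ∩ B) + μ (A (n + 1)) = μ (A n) := by
      have hdiff : A (n + 1) = A n \ B := by
        rw [hAsucc n, Set.diff_eq, hBdef, Set.preimage_compl]
      rw [hdiff]
      exact measure_inter_add_diff _ hBmeas
    have h2 : q n - q (n + 1) = (μ (A n ∩ B)).toReal := by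
      have h2' := congrArg ENNReal.toReal h1
      rw [ENNReal.toReal_add (measure_ne_top μ _) (measure_ne_top μ _)] at h2'
      simp only [hqdef]
      linarith
    have h3 : (μ (A n ∩ B)).toReal
        = ∫ ω in A n, quadrantS₀.indicator (fun _ => (1 : ℝ)) (X (n + 1) ω) ∂μ := by
      have heq : (fun ω => quadrantS₀.indicator (fun _ => (1 : ℝ)) (X (n + 1) ω))
          = B.indicator (fun _ => (1 : ℝ)) := by
        funext ω
        simp only [Set.indicator_apply, Set.mem_preimage, hBdef]
      rw [heq, setIntegral_indicator hBmeas, setIntegral_const]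
      simp [measureReal_def]
    have hCbound : ∀ p : ℤ × ℤ, |quadrantS₀.indicator (fun _ => (1 : ℝ)) p| ≤ 1 := by
      intro p; by_cases hp : p ∈ quadrantS₀ <;> simp [hp]
    have h4 := hkey n (quadrantS₀.indicator fun _ => (1 : ℝ)) 1 hCbound
    have h5 : ∀ p' : ℤ × ℤ, (∫ p, quadrantS₀.indicator (fun _ => (1 : ℝ)) p ∂(κ p'))
        = (κ p' quadrantS₀).toReal := by
      intro p'
      rw [integral_indicator_const (1 : ℝ) hS₀meas]
      simp [measureReal_def]
    have h6 : ∫ ω in A n, p₀ * S₁.indicator (fun _ => (1 : ℝ)) (X n ω) ∂μ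
        ≤ ∫ ω in A n, (κ (X n ω) quadrantS₀).toReal ∂μ := by
      have hm1 : Measurable (fun ω => p₀ * S₁.indicator (fun _ => (1 : ℝ)) (X n ω)) := by
        exact (measurable_of_discreteZZ
          (fun p : ℤ × ℤ => p₀ * S₁.indicator (fun _ => (1 : ℝ)) p)).comp (hXmeas n)
      have hm2 : Measurable (fun ω => ((κ (X n ω)) quadrantS₀).toReal) := by
        exact (measurable_of_discreteZZ
          (fun p : ℤ × ℤ => ((κ p) quadrantS₀).toReal)).comp (hXmeas n)
      refine setIntegral_mono_on
        (integrable_of_bdd (C := p₀) hm1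
          (fun ω => by by_cases hm : X n ω ∈ S₁ <;>
            simp [hm, abs_of_pos hp₀, hp₀.le]))
        (integrable_of_bdd (C := 1) hm2
          (fun ω => by
            rw [abs_of_nonneg ENNReal.toReal_nonneg]
            have hle := prob_le_one (μ := κ (X n ω)) (s := quadrantS₀)
            have := ENNReal.toReal_mono ENNReal.one_ne_top hle
            simpa using this))
        (hAmeas n) ?_
      intro ω _
      by_cases hmem : X n ω ∈ S₁
      · rw [Set.indicator_of_mem hmem, mul_one]
        have hble := hb _ hmem
        rw [ENNReal.ofReal_le_iff_le_toReal (measure_ne_top _ _)] at hble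
        exact hble
      · rw [Set.indicator_of_notMem hmem, mul_zero]
        exact ENNReal.toReal_nonneg
    have h7 : ∫ ω in A n, p₀ * S₁.indicator (fun _ => (1 : ℝ)) (X n ω) ∂μ = p₀ * s n := by
      have heq : (fun ω => p₀ * S₁.indicator (fun _ => (1 : ℝ)) (X n ω))
          = (X n ⁻¹' S₁).indicator (fun _ => p₀) := by
        funext ω
        simp only [Set.indicator_apply, Set.mem_preimage, mul_ite, mul_one, mul_zero]
      rw [heq, setIntegral_indicator ((hXmeas n) hS₁meas), setIntegral_const]
      simp only [hsdef, smul_eq_mul, measureReal_def]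
      ring
    calc p₀ * s n = ∫ ω in A n, p₀ * S₁.indicator (fun _ => (1 : ℝ)) (X n ω) ∂μ := h7.symm
      _ ≤ ∫ ω in A n, (κ (X n ω) quadrantS₀).toReal ∂μ := h6
      _ = ∫ ω in A n, (∫ p, quadrantS₀.indicator (fun _ => (1 : ℝ)) p ∂(κ (X n ω))) ∂μ := by
          simp_rw [h5]
      _ = ∫ ω in A n, quadrantS₀.indicator (fun _ => (1 : ℝ)) (X (n + 1) ω) ∂μ := h4.symm
      _ = (μ (A n ∩ B)).toReal := h3.symm
      _ = q n - q (n + 1) := h2.symm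
  -- base case of the induction
  have hbase : IntegrableOn (Y 0) (A 0) μ := by
    rw [hA0, IntegrableOn, Measure.restrict_univ]
    exact (integrable_const ((u : ℝ) * (v : ℝ))).congr
      (hX0.mono fun ω hω => by simp [hYdef, hω])
  have hIntAll : ∀ n, IntegrableOn (Y n) (A n) μ := by
    intro n
    induction n with
    | zero => exact hbase
    | succ m ih => exact (stepA m ih).1
  have hrec : ∀ n, g (n + 1) ≤ g n - d₁ * q n + d₂ * s n := fun n => (stepA n (hIntAll n)).2
  -- elementary facts
  have hgnn : ∀ n, 0 ≤ g n := by
    intro n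
    exact setIntegral_nonneg_ae (hAmeas n) ((hYnn n).mono fun ω hω _ => hω)
  have hqnn : ∀ n, 0 ≤ q n := fun n => ENNReal.toReal_nonneg
  have hq0 : q 0 = 1 := by simp [hqdef, hA0]
  have hg0 : g 0 = (u : ℝ) * (v : ℝ) := by
    rw [hgdef]
    simp only [hA0, Measure.restrict_univ]
    rw [integral_congr_ae (g := fun _ => (u : ℝ) * (v : ℝ))
      (hX0.mono fun ω hω => by simp [hYdef, hω])]
    simp
  -- telescoping
  have hsum : ∀ N : ℕ, ∑ n ∈ Finset.range N, q n ≤ (u : ℝ) * v / d₁ + d₂ / (d₁ * p₀) := by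
    intro N
    have hφ : ∀ n, g (n + 1) + (d₂ / p₀) * q (n + 1) + d₁ * q n ≤ g n + (d₂ / p₀) * q n := by
      intro n
      have h1 := hrec n
      have h2 := stepB n
      have h3 : d₂ * s n ≤ (d₂ / p₀) * (q n - q (n + 1)) := by
        rw [div_mul_eq_mul_div, le_div_iff₀ hp₀]
        nlinarith [hd₂.le]
      linarith
    have htel : ∀ M : ℕ, d₁ * ∑ n ∈ Finset.range M, q n + (g M + (d₂ / p₀) * q M)
        ≤ g 0 + (d₂ / p₀) * q 0 := by
      intro M
      induction M with
      | zero => simp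
      | succ M ih =>
        rw [Finset.sum_range_succ]
        have := hφ M
        linarith
    have h4 := htel N
    have h5 : 0 ≤ g N + (d₂ / p₀) * q N :=
      add_nonneg (hgnn N) (mul_nonneg (div_nonneg hd₂.le hp₀.le) (hqnn N))
    rw [hg0, hq0] at h4
    have h6 : (u : ℝ) * v / d₁ + d₂ / (d₁ * p₀) = ((u : ℝ) * v + d₂ / p₀) / d₁ := by
      field_simp
    rw [h6, le_div_iff₀ hd₁]
    nlinarith
  -- conclusion
  calc ∫⁻ ω, (⨅ (n : ℕ) (_ : 1 ≤ n ∧ X n ω ∈ quadrantS₀), (n : ℝ≥0∞)) ∂μ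
      ≤ ∫⁻ ω, ∑' n : ℕ, (A n).indicator (fun _ => (1 : ℝ≥0∞)) ω ∂μ :=
        lintegral_mono fun ω => tau_le_indicator_sum X ω
    _ = ∑' n : ℕ, μ (A n) := by
        rw [lintegral_tsum fun n =>
          ((measurable_const.indicator (hAmeas n)).aemeasurable)]
        congr 1
        funext n
        rw [lintegral_indicator_const (hAmeas n), one_mul]
    _ ≤ ENNReal.ofReal ((u : ℝ) * (v : ℝ) / d₁ + d₂ / (d₁ * p₀)) := by
        rw [ENNReal.tsum_eq_iSup_sum]
        refine iSup_le fun t => ?_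
        obtain ⟨N, hN⟩ := t.exists_nat_subset_range
        refine (Finset.sum_le_sum_of_subset hN).trans ?_
        have : ∑ n ∈ Finset.range N, μ (A n)
            = ENNReal.ofReal (∑ n ∈ Finset.range N, q n) := by
          rw [ENNReal.ofReal_sum_of_nonneg fun n _ => hqnn n]
          refine Finset.sum_congr rfl fun n _ => ?_
          rw [hqdef]
          exact (ENNReal.ofReal_toReal (measure_ne_top μ _)).symm
        rw [this]
        exact ENNReal.ofReal_le_ofReal (hsum N)
end

section
/- Let i, j ≥ 1 be integers and let three independent simple symmetric random walks S_n^{(L)} = −2i + Σ_{k=1}^n I_k^{(L)}, S_n^{(M)} = Σ_{k=1}^n I_k^{(M)}, S_n^{(R)} = 2j + Σ_{k=1}^n I_k^{(R)} be built from three independent i.i.d. Rademacher sequences. Define the first collision time τ_C := inf{n ≥ 1 : S_n^{(L)} = S_n^{(M)} or S_n^{(M)} = S_n^{(R)}}. Then E[τ_C] = 4ij. -/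
open MeasureTheory ProbabilityTheory
open scoped ENNReal

/-- Distance `D_n^{(L,M)} = S_n^{(M)} - S_n^{(L)}` between the middle walk
(started at `0`) and the left walk (started at `-2i`), with increments
`I^{(M)}` and `I^{(L)}` (the `k`-th increment `I_k` is `I (k-1)`). -/
noncomputable def distLM {Ω : Type*} (i : ℕ) (IL IM : ℕ → Ω → ℝ) (n : ℕ) (ω : Ω) : ℝ :=
  (∑ k ∈ Finset.range n, IM k ω) - (-(2 * (i : ℝ)) + ∑ k ∈ Finset.range n, IL k ω)

/-- Distance `D_n^{(M,R)} = S_n^{(R)} - S_n^{(M)}` between the right walk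
(started at `2j`) and the middle walk (started at `0`). -/
noncomputable def distMR {Ω : Type*} (j : ℕ) (IM IR : ℕ → Ω → ℝ) (n : ℕ) (ω : Ω) : ℝ :=
  (2 * (j : ℝ) + ∑ k ∈ Finset.range n, IR k ω) - (∑ k ∈ Finset.range n, IM k ω)

/-- First collision time `τ_C = inf {n ≥ 1 : D_n^{(L,M)} D_n^{(M,R)} = 0}`
of the three walks, with values in `ℝ≥0∞` (and `inf ∅ = ∞`). -/
noncomputable def collisionTime {Ω : Type*} (i j : ℕ) (IL IM IR : ℕ → Ω → ℝ) (ω : Ω) : ℝ≥0∞ :=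
  ⨅ (n : ℕ) (_ : 1 ≤ n ∧ distLM i IL IM n ω * distMR j IM IR n ω = 0), (n : ℝ≥0∞)


section Aux
set_option linter.unusedSectionVars false

variable {Ω : Type*} [MeasurableSpace Ω] {μ : Measure Ω} [IsProbabilityMeasure μ]

lemma rademacher_ae_pm {f : Ω → ℝ} (hf : Measurable f)
    (h1 : μ {ω | f ω = 1} = 1 / 2) (h2 : μ {ω | f ω = -1} = 1 / 2) :
    ∀ᵐ ω ∂μ, f ω = 1 ∨ f ω = -1 := by
  have hdisj : Disjoint {ω | f ω = 1} {ω | f ω = -1} := by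
    rw [Set.disjoint_left]
    intro ω hω1 hω2
    simp only [Set.mem_setOf_eq] at hω1 hω2
    norm_num [hω1] at hω2
  have hm1 : MeasurableSet {ω | f ω = 1} := hf (measurableSet_singleton 1)
  have hm2 : MeasurableSet {ω | f ω = -1} := hf (measurableSet_singleton (-1))
  have hunion : μ ({ω | f ω = 1} ∪ {ω | f ω = -1}) = 1 := by
    rw [measure_union hdisj hm2, h1, h2, ENNReal.div_add_div_same]
    rw [one_add_one_eq_two]
    exact ENNReal.div_self (two_ne_zero) (ENNReal.ofNat_ne_top)
  have hc : μ ({ω | f ω = 1} ∪ {ω | f ω = -1})ᶜ = 0 := by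
    rw [measure_compl (hm1.union hm2) (measure_ne_top μ _), hunion, measure_univ, tsub_self]
  filter_upwards [measure_eq_zero_iff_ae_notMem.mp hc] with ω hω
  rw [Set.notMem_compl_iff] at hω
  rcases hω with h | h
  exacts [Or.inl h, Or.inr h]

lemma rademacher_integral_zero {f : Ω → ℝ} (hf : Measurable f)
    (h1 : μ {ω | f ω = 1} = 1 / 2) (h2 : μ {ω | f ω = -1} = 1 / 2) :
    ∫ ω, f ω ∂μ = 0 := by
  have hm1 : MeasurableSet {ω | f ω = 1} := hf (measurableSet_singleton 1)
  have hm2 : MeasurableSet {ω | f ω = -1} := hf (measurableSet_singleton (-1))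
  have hae : f =ᵐ[μ] fun ω =>
      ({ω | f ω = 1}).indicator (1 : Ω → ℝ) ω - ({ω | f ω = -1}).indicator (1 : Ω → ℝ) ω := by
    filter_upwards [rademacher_ae_pm hf h1 h2] with ω hω
    rcases hω with h | h <;> norm_num [Set.indicator_apply, Set.mem_setOf_eq, h]
  have i1 : Integrable ({ω | f ω = 1}.indicator (1 : Ω → ℝ)) μ :=
    (integrable_const (1:ℝ)).indicator hm1
  have i2 : Integrable ({ω | f ω = -1}.indicator (1 : Ω → ℝ)) μ :=
    (integrable_const (1:ℝ)).indicator hm2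
  rw [integral_congr_ae hae, integral_sub i1 i2,
    integral_indicator_one hm1, integral_indicator_one hm2, measureReal_def, measureReal_def, h1, h2, sub_self]

/-- bounded a.e. measurable functions are integrable (on a probability space). -/
lemma integrable_of_bdd_s3 {f : Ω → ℝ} {C : ℝ} (hf : AEStronglyMeasurable f μ)
    (hC : ∀ᵐ ω ∂μ, |f ω| ≤ C) : Integrable f μ :=
  (integrable_const C).mono' hf (by filter_upwards [hC] with ω h using by simpa using h)

/-- the σ-algebra generated by a set of the increments -/
def pastSA (I : Fin 3 → ℕ → Ω → ℝ) (S : Set (Fin 3 × ℕ)) : MeasurableSpace Ω :=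
  ⨆ p ∈ S, MeasurableSpace.comap (fun ω => I p.1 p.2 ω) inferInstance

lemma pastSA_le {I : Fin 3 → ℕ → Ω → ℝ} (hmeas : ∀ a k, Measurable (I a k))
    (S : Set (Fin 3 × ℕ)) : pastSA I S ≤ ‹MeasurableSpace Ω› := by
  refine iSup₂_le fun p _ => ?_
  exact measurable_iff_comap_le.mp (hmeas p.1 p.2)

lemma pastSA_mono {I : Fin 3 → ℕ → Ω → ℝ} {S S' : Set (Fin 3 × ℕ)} (h : S ⊆ S') :
    pastSA I S ≤ pastSA I S' :=
  biSup_mono h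

lemma measurable_pastSA_I {I : Fin 3 → ℕ → Ω → ℝ} {S : Set (Fin 3 × ℕ)} {a : Fin 3} {k : ℕ}
    (hp : (a, k) ∈ S) : Measurable[pastSA I S] (I a k) := by
  rw [measurable_iff_comap_le]
  exact le_iSup₂ (f := fun (p : Fin 3 × ℕ) (_ : p ∈ S) =>
    MeasurableSpace.comap (fun ω => I p.1 p.2 ω) inferInstance) (a, k) hp

lemma indep_fresh {I : Fin 3 → ℕ → Ω → ℝ} (hmeas : ∀ a k, Measurable (I a k))
    (hindep : iIndepFun (β := fun _ : Fin 3 × ℕ => ℝ)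
      (fun p ω => I p.1 p.2 ω) μ)
    {S : Set (Fin 3 × ℕ)} {a : Fin 3} {k : ℕ} (hp : (a, k) ∉ S) :
    Indep (pastSA I S) (MeasurableSpace.comap (fun ω => I a k ω) inferInstance) μ := by
  have h := indep_iSup_of_disjoint (m := fun p : Fin 3 × ℕ =>
      MeasurableSpace.comap (fun ω => I p.1 p.2 ω) inferInstance)
    (fun p => measurable_iff_comap_le.mp (hmeas p.1 p.2)) hindep.iIndep
    (S := S) (T := {(a, k)}) (Set.disjoint_singleton_right.mpr hp)
  simpa [pastSA] using h

/-- The workhorse: a past-measurable bounded variable times a fresh increment has zero mean. -/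
lemma integral_mul_fresh {I : Fin 3 → ℕ → Ω → ℝ} (hmeas : ∀ a k, Measurable (I a k))
    (hindep : iIndepFun (β := fun _ : Fin 3 × ℕ => ℝ)
      (fun p ω => I p.1 p.2 ω) μ)
    (hrad : ∀ a k, μ {ω | I a k ω = 1} = 1 / 2 ∧ μ {ω | I a k ω = -1} = 1 / 2)
    {S : Set (Fin 3 × ℕ)} {a : Fin 3} {k : ℕ} (hp : (a, k) ∉ S)
    {H : Ω → ℝ} (hH : Measurable[pastSA I S] H) {C : ℝ} (hC : ∀ᵐ ω ∂μ, |H ω| ≤ C) :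
    ∫ ω, H ω * I a k ω ∂μ = 0 := by
  have hindep' : IndepFun H (I a k) μ := by
    rw [IndepFun_iff_Indep]
    exact indep_of_indep_of_le_left (indep_fresh hmeas hindep hp)
      (measurable_iff_comap_le.mp hH)
  have hHm : Measurable H := hH.mono (pastSA_le hmeas S) le_rfl
  have hHint : Integrable H μ := integrable_of_bdd_s3 hHm.aestronglyMeasurable hC
  have hIint : Integrable (I a k) μ := by
    refine integrable_of_bdd_s3 (hmeas a k).aestronglyMeasurable
      (C := 1) ?_
    filter_upwards [rademacher_ae_pm (hmeas a k) (hrad a k).1 (hrad a k).2] with ω h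
    rcases h with h | h <;> simp [h]
  have := hindep'.integral_mul_eq_mul_integral hHint.1 hIint.1
  have hz : ∫ ω, I a k ω ∂μ = 0 :=
    rademacher_integral_zero (hmeas a k) (hrad a k).1 (hrad a k).2
  calc ∫ ω, H ω * I a k ω ∂μ = ∫ ω, (H * I a k) ω ∂μ := rfl
    _ = (∫ ω, H ω ∂μ) * ∫ ω, I a k ω ∂μ := this
    _ = 0 := by rw [hz, mul_zero]

end Aux


section Walks
set_option linter.unusedSectionVars false

variable {Ω : Type*}

noncomputable def Xw (i : ℕ) (I : Fin 3 → ℕ → Ω → ℝ) (n : ℕ) (ω : Ω) : ℝ :=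
  distLM i (I 0) (I 1) n ω

noncomputable def Yw (j : ℕ) (I : Fin 3 → ℕ → Ω → ℝ) (n : ℕ) (ω : Ω) : ℝ :=
  distMR j (I 1) (I 2) n ω

def Tset (i j : ℕ) (I : Fin 3 → ℕ → Ω → ℝ) (n : ℕ) : Set Ω :=
  {ω | ∀ m, 1 ≤ m → m ≤ n → Xw i I m ω * Yw j I m ω ≠ 0}

def pastn (n : ℕ) : Set (Fin 3 × ℕ) := {p | p.2 < n}

lemma Xw_zero (i : ℕ) (I : Fin 3 → ℕ → Ω → ℝ) (ω : Ω) : Xw i I 0 ω = 2 * i := by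
  simp [Xw, distLM]

lemma Yw_zero (j : ℕ) (I : Fin 3 → ℕ → Ω → ℝ) (ω : Ω) : Yw j I 0 ω = 2 * j := by
  simp [Yw, distMR]

lemma Xw_succ (i : ℕ) (I : Fin 3 → ℕ → Ω → ℝ) (n : ℕ) (ω : Ω) :
    Xw i I (n + 1) ω = Xw i I n ω + (I 1 n ω - I 0 n ω) := by
  simp only [Xw, distLM, Finset.sum_range_succ]; ring

lemma Yw_succ (j : ℕ) (I : Fin 3 → ℕ → Ω → ℝ) (n : ℕ) (ω : Ω) :
    Yw j I (n + 1) ω = Yw j I n ω + (I 2 n ω - I 1 n ω) := by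
  simp only [Yw, distMR, Finset.sum_range_succ]; ring

lemma Tset_zero (i j : ℕ) (I : Fin 3 → ℕ → Ω → ℝ) : Tset i j I 0 = Set.univ := by
  ext ω; simp only [Tset, Set.mem_setOf_eq, Set.mem_univ, iff_true]
  intro m hm hm0; omega

lemma Tset_antitone (i j : ℕ) (I : Fin 3 → ℕ → Ω → ℝ) {n n' : ℕ} (h : n ≤ n') :
    Tset i j I n' ⊆ Tset i j I n := fun ω hω m hm hmn => hω m hm (hmn.trans h)

section Meas
variable [MeasurableSpace Ω]

lemma measurable_Xw_past (i : ℕ) (I : Fin 3 → ℕ → Ω → ℝ) {m n : ℕ} (hmn : m ≤ n) :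
    Measurable[pastSA I (pastn n)] (fun ω => Xw i I m ω) := by
  have h1 : ∀ k, k < m → Measurable[pastSA I (pastn n)] (I 1 k) := fun k hk =>
    measurable_pastSA_I (show ((1 : Fin 3), k) ∈ pastn n from lt_of_lt_of_le hk hmn)
  have h0 : ∀ k, k < m → Measurable[pastSA I (pastn n)] (I 0 k) := fun k hk =>
    measurable_pastSA_I (show ((0 : Fin 3), k) ∈ pastn n from lt_of_lt_of_le hk hmn)
  unfold Xw distLM
  apply Measurable.sub
  · exact Finset.measurable_sum _ fun k hk => h1 k (Finset.mem_range.mp hk)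
  · exact Measurable.add measurable_const
      (Finset.measurable_sum _ fun k hk => h0 k (Finset.mem_range.mp hk))

lemma measurable_Yw_past (j : ℕ) (I : Fin 3 → ℕ → Ω → ℝ) {m n : ℕ} (hmn : m ≤ n) :
    Measurable[pastSA I (pastn n)] (fun ω => Yw j I m ω) := by
  have h2 : ∀ k, k < m → Measurable[pastSA I (pastn n)] (I 2 k) := fun k hk =>
    measurable_pastSA_I (show ((2 : Fin 3), k) ∈ pastn n from lt_of_lt_of_le hk hmn)
  have h1 : ∀ k, k < m → Measurable[pastSA I (pastn n)] (I 1 k) := fun k hk =>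
    measurable_pastSA_I (show ((1 : Fin 3), k) ∈ pastn n from lt_of_lt_of_le hk hmn)
  unfold Yw distMR
  apply Measurable.sub
  · exact Measurable.add measurable_const
      (Finset.measurable_sum _ fun k hk => h2 k (Finset.mem_range.mp hk))
  · exact Finset.measurable_sum _ fun k hk => h1 k (Finset.mem_range.mp hk)

lemma measurableSet_Tset_past (i j : ℕ) (I : Fin 3 → ℕ → Ω → ℝ) (n : ℕ) :
    MeasurableSet[pastSA I (pastn n)] (Tset i j I n) := by
  have : Tset i j I n =
      ⋂ (m : ℕ) (_ : 1 ≤ m ∧ m ≤ n), {ω | Xw i I m ω * Yw j I m ω ≠ 0} := by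
    ext ω
    simp only [Tset, Set.mem_setOf_eq, Set.mem_iInter, and_imp]
  rw [this]
  refine MeasurableSet.iInter fun m => MeasurableSet.iInter fun hm => ?_
  have hx := measurable_Xw_past (Ω := Ω) i I hm.2
  have hy := measurable_Yw_past (Ω := Ω) j I hm.2
  exact ((hx.mul hy) (measurableSet_singleton (0 : ℝ))).compl

end Meas

/-- Pointwise value/parity bookkeeping: one step preserving even positivity. -/
lemma step_even_pos {x d : ℝ} {z : ℤ} (hx : x = 2 * z) (h2 : 2 ≤ x)
    (hd : d = 2 ∨ d = 0 ∨ d = -2) (hne : x + d ≠ 0) :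
    2 ≤ x + d ∧ ∃ z' : ℤ, x + d = 2 * z' := by
  have hz1 : 1 ≤ z := by
    have : (1 : ℝ) ≤ z := by nlinarith
    exact_mod_cast this
  rcases hd with h | h | h
  · refine ⟨by nlinarith, z + 1, by rw [hx, h]; push_cast; ring⟩
  · refine ⟨by nlinarith, z, by rw [hx, h]; ring⟩
  · have hne' : z - 1 ≠ 0 := by
      intro hz0
      apply hne
      rw [hx, h]
      have : (z : ℝ) = 1 := by
        have : z = 1 := by omega
        exact_mod_cast this
      rw [this]; ring
    have hz2 : 2 ≤ z := by omega
    refine ⟨by nlinarith [(by exact_mod_cast hz2 : (2:ℝ) ≤ z)], z - 1, by rw [hx, h]; push_cast; ring⟩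

lemma pm_diff_cases {a b : ℝ} (ha : a = 1 ∨ a = -1) (hb : b = 1 ∨ b = -1) :
    a - b = 2 ∨ a - b = 0 ∨ a - b = -2 := by
  rcases ha with h | h <;> rcases hb with h' | h' <;> norm_num [h, h']

/-- On the event that no collision happened up to time `n`, both walks stay `≥ 2`
(and are even), for every `m ≤ n`. -/
lemma pos_on_Tset {i j : ℕ} (hi : 1 ≤ i) (hj : 1 ≤ j) {I : Fin 3 → ℕ → Ω → ℝ} {ω : Ω}
    (hpm : ∀ a k, I a k ω = 1 ∨ I a k ω = -1) {n : ℕ} (hT : ω ∈ Tset i j I n) :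
    ∀ m, m ≤ n → (2 ≤ Xw i I m ω ∧ ∃ z : ℤ, Xw i I m ω = 2 * z) ∧
      (2 ≤ Yw j I m ω ∧ ∃ z : ℤ, Yw j I m ω = 2 * z) := by
  intro m hmn
  induction m with
  | zero =>
    constructor
    · constructor
      · rw [Xw_zero]; nlinarith [(by exact_mod_cast hi : (1:ℝ) ≤ (i:ℝ))]
      · exact ⟨i, by rw [Xw_zero]; push_cast; ring⟩
    · constructor
      · rw [Yw_zero]; nlinarith [(by exact_mod_cast hj : (1:ℝ) ≤ (j:ℝ))]
      · exact ⟨j, by rw [Yw_zero]; push_cast; ring⟩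
  | succ m ih =>
    have hm' : m ≤ n := Nat.le_of_succ_le hmn
    obtain ⟨⟨hx2, zx, hzx⟩, hy2, zy, hzy⟩ := ih hm'
    have hprod : Xw i I (m + 1) ω * Yw j I (m + 1) ω ≠ 0 :=
      hT (m + 1) (Nat.succ_le_succ (Nat.zero_le m)) hmn
    have hdx := pm_diff_cases (hpm 1 m) (hpm 0 m)
    have hdy := pm_diff_cases (hpm 2 m) (hpm 1 m)
    have hXne : Xw i I (m + 1) ω ≠ 0 := left_ne_zero_of_mul hprod
    have hYne : Yw j I (m + 1) ω ≠ 0 := right_ne_zero_of_mul hprod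
    rw [Xw_succ] at hXne ⊢
    rw [Yw_succ] at hYne ⊢
    exact ⟨step_even_pos hzx hx2 hdx hXne, step_even_pos hzy hy2 hdy hYne⟩

/-- deterministic bound on the walks. -/
lemma abs_Xw_le {i : ℕ} {I : Fin 3 → ℕ → Ω → ℝ} {ω : Ω}
    (hpm : ∀ a k, I a k ω = 1 ∨ I a k ω = -1) (n : ℕ) :
    |Xw i I n ω| ≤ 2 * i + 2 * n := by
  induction n with
  | zero => rw [Xw_zero]; rw [abs_of_nonneg (by positivity)]; push_cast; linarith
  | succ n ih =>
    rw [Xw_succ]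
    have hd := pm_diff_cases (hpm 1 n) (hpm 0 n)
    have : |Xw i I n ω + (I 1 n ω - I 0 n ω)| ≤ |Xw i I n ω| + |I 1 n ω - I 0 n ω| :=
      abs_add_le _ _
    have hd2 : |I 1 n ω - I 0 n ω| ≤ 2 := by
      rcases hd with h | h | h <;> rw [h] <;> norm_num
    push_cast
    push_cast at ih
    linarith

lemma abs_Yw_le {j : ℕ} {I : Fin 3 → ℕ → Ω → ℝ} {ω : Ω}
    (hpm : ∀ a k, I a k ω = 1 ∨ I a k ω = -1) (n : ℕ) :
    |Yw j I n ω| ≤ 2 * j + 2 * n := by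
  induction n with
  | zero => rw [Yw_zero]; rw [abs_of_nonneg (by positivity)]; push_cast; linarith
  | succ n ih =>
    rw [Yw_succ]
    have hd := pm_diff_cases (hpm 2 n) (hpm 1 n)
    have : |Yw j I n ω + (I 2 n ω - I 1 n ω)| ≤ |Yw j I n ω| + |I 2 n ω - I 1 n ω| :=
      abs_add_le _ _
    have hd2 : |I 2 n ω - I 1 n ω| ≤ 2 := by
      rcases hd with h | h | h <;> rw [h] <;> norm_num
    push_cast
    push_cast at ih
    linarith

end Walks
section Fresh

lemma abs_mul_le {a b A B : ℝ} (ha : |a| ≤ A) (hb : |b| ≤ B) : |a * b| ≤ A * B := by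
  rw [abs_mul]
  exact mul_le_mul ha hb (abs_nonneg _) (le_trans (abs_nonneg _) ha)

lemma abs_indicator_one_le {Ω : Type*} (s : Set Ω) (ω : Ω) :
    |s.indicator (1 : Ω → ℝ) ω| ≤ 1 := by
  by_cases h : ω ∈ s <;> simp [Set.indicator_apply, h]

lemma not_mem_pastn (a : Fin 3) (n : ℕ) : (a, n) ∉ pastn n := by
  simp [pastn]

lemma not_mem_pastn_union {a b : Fin 3} (hab : a ≠ b) (n : ℕ) :
    (a, n) ∉ pastn n ∪ {(b, n)} := by
  simp [pastn, Prod.ext_iff, hab]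

end Fresh

section Rec
set_option linter.unusedSectionVars false
set_option maxHeartbeats 1000000

variable {Ω : Type*} [MeasurableSpace Ω] {μ : Measure Ω} [IsProbabilityMeasure μ]
  {I : Fin 3 → ℕ → Ω → ℝ}

lemma ae_pm (hmeas : ∀ a k, Measurable (I a k))
    (hrad : ∀ a k, μ {ω | I a k ω = 1} = 1 / 2 ∧ μ {ω | I a k ω = -1} = 1 / 2) :
    ∀ᵐ ω ∂μ, ∀ a k, I a k ω = 1 ∨ I a k ω = -1 := by
  rw [ae_all_iff]
  intro a
  rw [ae_all_iff]
  intro k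
  exact rademacher_ae_pm (hmeas a k) (hrad a k).1 (hrad a k).2

lemma meas_Xw_amb (hmeas : ∀ a k, Measurable (I a k)) (i n : ℕ) :
    Measurable (fun ω => Xw i I n ω) :=
  (measurable_Xw_past i I le_rfl).mono (pastSA_le hmeas _) le_rfl

lemma meas_Yw_amb (hmeas : ∀ a k, Measurable (I a k)) (j n : ℕ) :
    Measurable (fun ω => Yw j I n ω) :=
  (measurable_Yw_past j I le_rfl).mono (pastSA_le hmeas _) le_rfl

lemma measSet_Tset (hmeas : ∀ a k, Measurable (I a k)) (i j n : ℕ) :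
    MeasurableSet (Tset i j I n) :=
  (pastSA_le hmeas (pastn n)) _ (measurableSet_Tset_past i j I n)

lemma meas_ind_amb (hmeas : ∀ a k, Measurable (I a k)) (i j n : ℕ) :
    Measurable ((Tset i j I n).indicator (1 : Ω → ℝ)) :=
  measurable_const.indicator (measSet_Tset hmeas i j n)

lemma meas_ind_past (i j n : ℕ) :
    Measurable[pastSA I (pastn n)] ((Tset i j I n).indicator (1 : Ω → ℝ)) :=
  Measurable.indicator (m := pastSA I (pastn n)) measurable_const
    (measurableSet_Tset_past i j I n)

end Rec
section StepAB
set_option linter.unusedSectionVars false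
set_option maxHeartbeats 1600000

variable {Ω : Type*} [MeasurableSpace Ω] {μ : Measure Ω} [IsProbabilityMeasure μ]
  {I : Fin 3 → ℕ → Ω → ℝ}

lemma abs_pm_le {x : ℝ} (h : x = 1 ∨ x = -1) : |x| ≤ 1 := by
  rcases h with h | h <;> rw [h] <;> norm_num

lemma abs_add_le_of {a b A B : ℝ} (ha : |a| ≤ A) (hb : |b| ≤ B) : |a + b| ≤ A + B :=
  (abs_add_le _ _).trans (add_le_add ha hb)

lemma step_A (hmeas : ∀ a k, Measurable (I a k))
    (hindep : iIndepFun (β := fun _ : Fin 3 × ℕ => ℝ)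
      (fun p ω => I p.1 p.2 ω) μ)
    (hrad : ∀ a k, μ {ω | I a k ω = 1} = 1 / 2 ∧ μ {ω | I a k ω = -1} = 1 / 2)
    (i j n : ℕ) :
    ∫ ω, Xw i I (n + 1) ω * Yw j I (n + 1) ω * (Tset i j I n).indicator (1 : Ω → ℝ) ω ∂μ
      = (∫ ω, Xw i I n ω * Yw j I n ω * (Tset i j I n).indicator (1 : Ω → ℝ) ω ∂μ)
        - (μ (Tset i j I n)).toReal := by
  have hpm := ae_pm hmeas hrad
  have hXp : Measurable[pastSA I (pastn n)] (fun ω => Xw i I n ω) :=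
    measurable_Xw_past i I le_rfl
  have hYp : Measurable[pastSA I (pastn n)] (fun ω => Yw j I n ω) :=
    measurable_Yw_past j I le_rfl
  have hhp : Measurable[pastSA I (pastn n)] ((Tset i j I n).indicator (1 : Ω → ℝ)) :=
    meas_ind_past i j n
  have hXa : Measurable (fun ω => Xw i I n ω) := meas_Xw_amb hmeas i n
  have hYa : Measurable (fun ω => Yw j I n ω) := meas_Yw_amb hmeas j n
  have hha : Measurable ((Tset i j I n).indicator (1 : Ω → ℝ)) := meas_ind_amb hmeas i j n
  have hv1 : Measurable[pastSA I (pastn n ∪ {((1 : Fin 3), n)})] (I 1 n) :=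
    measurable_pastSA_I (Set.mem_union_right _ rfl)
  have hu0 : Measurable[pastSA I (pastn n ∪ {((0 : Fin 3), n)})] (I 0 n) :=
    measurable_pastSA_I (Set.mem_union_right _ rfl)
  have hmono1 : pastSA I (pastn n) ≤ pastSA I (pastn n ∪ {((1 : Fin 3), n)}) :=
    pastSA_mono Set.subset_union_left
  have hmono0 : pastSA I (pastn n) ≤ pastSA I (pastn n ∪ {((0 : Fin 3), n)}) :=
    pastSA_mono Set.subset_union_left
  have key : (fun ω => Xw i I (n + 1) ω * Yw j I (n + 1) ω *
        (Tset i j I n).indicator (1 : Ω → ℝ) ω)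
      =ᵐ[μ] (fun ω => Xw i I n ω * Yw j I n ω * (Tset i j I n).indicator (1 : Ω → ℝ) ω
          - (Tset i j I n).indicator (1 : Ω → ℝ) ω
          + Xw i I n ω * (Tset i j I n).indicator (1 : Ω → ℝ) ω * I 2 n ω
          - Xw i I n ω * (Tset i j I n).indicator (1 : Ω → ℝ) ω * I 1 n ω
          + Yw j I n ω * (Tset i j I n).indicator (1 : Ω → ℝ) ω * I 1 n ω
          - Yw j I n ω * (Tset i j I n).indicator (1 : Ω → ℝ) ω * I 0 n ω
          + (Tset i j I n).indicator (1 : Ω → ℝ) ω * I 1 n ω * I 2 n ω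
          - (Tset i j I n).indicator (1 : Ω → ℝ) ω * I 0 n ω * I 2 n ω
          + (Tset i j I n).indicator (1 : Ω → ℝ) ω * I 0 n ω * I 1 n ω) := by
    filter_upwards [hpm] with ω hω
    rw [Xw_succ, Yw_succ]
    rcases hω 0 n with h0 | h0 <;> rcases hω 1 n with h1 | h1 <;> rcases hω 2 n with h2 | h2 <;>
      rw [h0, h1, h2] <;> ring
  rw [integral_congr_ae key]
  have z1 : ∫ ω, Xw i I n ω * (Tset i j I n).indicator (1 : Ω → ℝ) ω * I 2 n ω ∂μ = 0 := by
    refine integral_mul_fresh hmeas hindep hrad (not_mem_pastn 2 n)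
      ((hXp.mul hhp)) (C := (2 * (i:ℝ) + 2 * n) * 1) ?_
    filter_upwards [hpm] with ω hω
    exact abs_mul_le ((abs_Xw_le hω n)) (abs_indicator_one_le _ ω)
  have int_t1 : Integrable (fun ω => Xw i I n ω * (Tset i j I n).indicator (1 : Ω → ℝ) ω * I 2 n ω) μ := by
    refine integrable_of_bdd_s3 (C := (2 * (i:ℝ) + 2 * n) * 1 * 1) (((hXa.mul hha).mul (hmeas 2 n))).aestronglyMeasurable ?_
    filter_upwards [hpm] with ω hω
    exact abs_mul_le (abs_mul_le ((abs_Xw_le hω n)) (abs_indicator_one_le _ ω)) (abs_pm_le (hω 2 n))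
  have z2 : ∫ ω, Xw i I n ω * (Tset i j I n).indicator (1 : Ω → ℝ) ω * I 1 n ω ∂μ = 0 := by
    refine integral_mul_fresh hmeas hindep hrad (not_mem_pastn 1 n)
      ((hXp.mul hhp)) (C := (2 * (i:ℝ) + 2 * n) * 1) ?_
    filter_upwards [hpm] with ω hω
    exact abs_mul_le ((abs_Xw_le hω n)) (abs_indicator_one_le _ ω)
  have int_t2 : Integrable (fun ω => Xw i I n ω * (Tset i j I n).indicator (1 : Ω → ℝ) ω * I 1 n ω) μ := by
    refine integrable_of_bdd_s3 (C := (2 * (i:ℝ) + 2 * n) * 1 * 1) (((hXa.mul hha).mul (hmeas 1 n))).aestronglyMeasurable ?_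
    filter_upwards [hpm] with ω hω
    exact abs_mul_le (abs_mul_le ((abs_Xw_le hω n)) (abs_indicator_one_le _ ω)) (abs_pm_le (hω 1 n))
  have z3 : ∫ ω, Yw j I n ω * (Tset i j I n).indicator (1 : Ω → ℝ) ω * I 1 n ω ∂μ = 0 := by
    refine integral_mul_fresh hmeas hindep hrad (not_mem_pastn 1 n)
      ((hYp.mul hhp)) (C := (2 * (j:ℝ) + 2 * n) * 1) ?_
    filter_upwards [hpm] with ω hω
    exact abs_mul_le ((abs_Yw_le hω n)) (abs_indicator_one_le _ ω)
  have int_t3 : Integrable (fun ω => Yw j I n ω * (Tset i j I n).indicator (1 : Ω → ℝ) ω * I 1 n ω) μ := by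
    refine integrable_of_bdd_s3 (C := (2 * (j:ℝ) + 2 * n) * 1 * 1) (((hYa.mul hha).mul (hmeas 1 n))).aestronglyMeasurable ?_
    filter_upwards [hpm] with ω hω
    exact abs_mul_le (abs_mul_le ((abs_Yw_le hω n)) (abs_indicator_one_le _ ω)) (abs_pm_le (hω 1 n))
  have z4 : ∫ ω, Yw j I n ω * (Tset i j I n).indicator (1 : Ω → ℝ) ω * I 0 n ω ∂μ = 0 := by
    refine integral_mul_fresh hmeas hindep hrad (not_mem_pastn 0 n)
      ((hYp.mul hhp)) (C := (2 * (j:ℝ) + 2 * n) * 1) ?_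
    filter_upwards [hpm] with ω hω
    exact abs_mul_le ((abs_Yw_le hω n)) (abs_indicator_one_le _ ω)
  have int_t4 : Integrable (fun ω => Yw j I n ω * (Tset i j I n).indicator (1 : Ω → ℝ) ω * I 0 n ω) μ := by
    refine integrable_of_bdd_s3 (C := (2 * (j:ℝ) + 2 * n) * 1 * 1) (((hYa.mul hha).mul (hmeas 0 n))).aestronglyMeasurable ?_
    filter_upwards [hpm] with ω hω
    exact abs_mul_le (abs_mul_le ((abs_Yw_le hω n)) (abs_indicator_one_le _ ω)) (abs_pm_le (hω 0 n))
  have z5 : ∫ ω, (Tset i j I n).indicator (1 : Ω → ℝ) ω * I 1 n ω * I 2 n ω ∂μ = 0 := by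
    refine integral_mul_fresh hmeas hindep hrad (not_mem_pastn_union (show (2 : Fin 3) ≠ 1 by decide) n)
      (((hhp.mono hmono1 le_rfl).mul hv1)) (C := 1 * 1) ?_
    filter_upwards [hpm] with ω hω
    exact abs_mul_le ((abs_indicator_one_le _ ω)) (abs_pm_le (hω 1 n))
  have int_t5 : Integrable (fun ω => (Tset i j I n).indicator (1 : Ω → ℝ) ω * I 1 n ω * I 2 n ω) μ := by
    refine integrable_of_bdd_s3 (C := 1 * 1 * 1) (((hha.mul (hmeas 1 n)).mul (hmeas 2 n))).aestronglyMeasurable ?_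
    filter_upwards [hpm] with ω hω
    exact abs_mul_le (abs_mul_le ((abs_indicator_one_le _ ω)) (abs_pm_le (hω 1 n))) (abs_pm_le (hω 2 n))
  have z6 : ∫ ω, (Tset i j I n).indicator (1 : Ω → ℝ) ω * I 0 n ω * I 2 n ω ∂μ = 0 := by
    refine integral_mul_fresh hmeas hindep hrad (not_mem_pastn_union (show (2 : Fin 3) ≠ 0 by decide) n)
      (((hhp.mono hmono0 le_rfl).mul hu0)) (C := 1 * 1) ?_
    filter_upwards [hpm] with ω hω
    exact abs_mul_le ((abs_indicator_one_le _ ω)) (abs_pm_le (hω 0 n))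
  have int_t6 : Integrable (fun ω => (Tset i j I n).indicator (1 : Ω → ℝ) ω * I 0 n ω * I 2 n ω) μ := by
    refine integrable_of_bdd_s3 (C := 1 * 1 * 1) (((hha.mul (hmeas 0 n)).mul (hmeas 2 n))).aestronglyMeasurable ?_
    filter_upwards [hpm] with ω hω
    exact abs_mul_le (abs_mul_le ((abs_indicator_one_le _ ω)) (abs_pm_le (hω 0 n))) (abs_pm_le (hω 2 n))
  have z7 : ∫ ω, (Tset i j I n).indicator (1 : Ω → ℝ) ω * I 0 n ω * I 1 n ω ∂μ = 0 := by
    refine integral_mul_fresh hmeas hindep hrad (not_mem_pastn_union (show (1 : Fin 3) ≠ 0 by decide) n)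
      (((hhp.mono hmono0 le_rfl).mul hu0)) (C := 1 * 1) ?_
    filter_upwards [hpm] with ω hω
    exact abs_mul_le ((abs_indicator_one_le _ ω)) (abs_pm_le (hω 0 n))
  have int_t7 : Integrable (fun ω => (Tset i j I n).indicator (1 : Ω → ℝ) ω * I 0 n ω * I 1 n ω) μ := by
    refine integrable_of_bdd_s3 (C := 1 * 1 * 1) (((hha.mul (hmeas 0 n)).mul (hmeas 1 n))).aestronglyMeasurable ?_
    filter_upwards [hpm] with ω hω
    exact abs_mul_le (abs_mul_le ((abs_indicator_one_le _ ω)) (abs_pm_le (hω 0 n))) (abs_pm_le (hω 1 n))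
  have int_b0 : Integrable (fun ω => Xw i I n ω * Yw j I n ω * (Tset i j I n).indicator (1 : Ω → ℝ) ω) μ := by
    refine integrable_of_bdd_s3 (C := (2 * (i:ℝ) + 2 * n) * (2 * (j:ℝ) + 2 * n) * 1) ((hXa.mul hYa).mul hha).aestronglyMeasurable ?_
    filter_upwards [hpm] with ω hω
    exact abs_mul_le (abs_mul_le (abs_Xw_le hω n) (abs_Yw_le hω n)) (abs_indicator_one_le _ ω)
  have int_h : Integrable ((Tset i j I n).indicator (1 : Ω → ℝ)) μ :=
    (integrable_const (1 : ℝ)).indicator (measSet_Tset hmeas i j n)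
  have c_0 := int_b0
  have c_1 := c_0.sub int_h
  have c_2 := c_1.add int_t1
  have c_3 := c_2.sub int_t2
  have c_4 := c_3.add int_t3
  have c_5 := c_4.sub int_t4
  have c_6 := c_5.add int_t5
  have c_7 := c_6.sub int_t6
  have c_8 := c_7.add int_t7
  have step_8 : ∫ ω, (Xw i I n ω * Yw j I n ω * (Tset i j I n).indicator (1 : Ω → ℝ) ω
          - (Tset i j I n).indicator (1 : Ω → ℝ) ω
          + Xw i I n ω * (Tset i j I n).indicator (1 : Ω → ℝ) ω * I 2 n ω
          - Xw i I n ω * (Tset i j I n).indicator (1 : Ω → ℝ) ω * I 1 n ω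
          + Yw j I n ω * (Tset i j I n).indicator (1 : Ω → ℝ) ω * I 1 n ω
          - Yw j I n ω * (Tset i j I n).indicator (1 : Ω → ℝ) ω * I 0 n ω
          + (Tset i j I n).indicator (1 : Ω → ℝ) ω * I 1 n ω * I 2 n ω
          - (Tset i j I n).indicator (1 : Ω → ℝ) ω * I 0 n ω * I 2 n ω
          + (Tset i j I n).indicator (1 : Ω → ℝ) ω * I 0 n ω * I 1 n ω) ∂μ
      = (∫ ω, (Xw i I n ω * Yw j I n ω * (Tset i j I n).indicator (1 : Ω → ℝ) ω
          - (Tset i j I n).indicator (1 : Ω → ℝ) ω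
          + Xw i I n ω * (Tset i j I n).indicator (1 : Ω → ℝ) ω * I 2 n ω
          - Xw i I n ω * (Tset i j I n).indicator (1 : Ω → ℝ) ω * I 1 n ω
          + Yw j I n ω * (Tset i j I n).indicator (1 : Ω → ℝ) ω * I 1 n ω
          - Yw j I n ω * (Tset i j I n).indicator (1 : Ω → ℝ) ω * I 0 n ω
          + (Tset i j I n).indicator (1 : Ω → ℝ) ω * I 1 n ω * I 2 n ω
          - (Tset i j I n).indicator (1 : Ω → ℝ) ω * I 0 n ω * I 2 n ω) ∂μ) + ∫ ω, ((Tset i j I n).indicator (1 : Ω → ℝ) ω * I 0 n ω * I 1 n ω) ∂μ :=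
    integral_add c_7 int_t7
  have step_7 : ∫ ω, (Xw i I n ω * Yw j I n ω * (Tset i j I n).indicator (1 : Ω → ℝ) ω
          - (Tset i j I n).indicator (1 : Ω → ℝ) ω
          + Xw i I n ω * (Tset i j I n).indicator (1 : Ω → ℝ) ω * I 2 n ω
          - Xw i I n ω * (Tset i j I n).indicator (1 : Ω → ℝ) ω * I 1 n ω
          + Yw j I n ω * (Tset i j I n).indicator (1 : Ω → ℝ) ω * I 1 n ω
          - Yw j I n ω * (Tset i j I n).indicator (1 : Ω → ℝ) ω * I 0 n ω
          + (Tset i j I n).indicator (1 : Ω → ℝ) ω * I 1 n ω * I 2 n ω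
          - (Tset i j I n).indicator (1 : Ω → ℝ) ω * I 0 n ω * I 2 n ω) ∂μ
      = (∫ ω, (Xw i I n ω * Yw j I n ω * (Tset i j I n).indicator (1 : Ω → ℝ) ω
          - (Tset i j I n).indicator (1 : Ω → ℝ) ω
          + Xw i I n ω * (Tset i j I n).indicator (1 : Ω → ℝ) ω * I 2 n ω
          - Xw i I n ω * (Tset i j I n).indicator (1 : Ω → ℝ) ω * I 1 n ω
          + Yw j I n ω * (Tset i j I n).indicator (1 : Ω → ℝ) ω * I 1 n ω
          - Yw j I n ω * (Tset i j I n).indicator (1 : Ω → ℝ) ω * I 0 n ω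
          + (Tset i j I n).indicator (1 : Ω → ℝ) ω * I 1 n ω * I 2 n ω) ∂μ) - ∫ ω, ((Tset i j I n).indicator (1 : Ω → ℝ) ω * I 0 n ω * I 2 n ω) ∂μ :=
    integral_sub c_6 int_t6
  have step_6 : ∫ ω, (Xw i I n ω * Yw j I n ω * (Tset i j I n).indicator (1 : Ω → ℝ) ω
          - (Tset i j I n).indicator (1 : Ω → ℝ) ω
          + Xw i I n ω * (Tset i j I n).indicator (1 : Ω → ℝ) ω * I 2 n ω
          - Xw i I n ω * (Tset i j I n).indicator (1 : Ω → ℝ) ω * I 1 n ω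
          + Yw j I n ω * (Tset i j I n).indicator (1 : Ω → ℝ) ω * I 1 n ω
          - Yw j I n ω * (Tset i j I n).indicator (1 : Ω → ℝ) ω * I 0 n ω
          + (Tset i j I n).indicator (1 : Ω → ℝ) ω * I 1 n ω * I 2 n ω) ∂μ
      = (∫ ω, (Xw i I n ω * Yw j I n ω * (Tset i j I n).indicator (1 : Ω → ℝ) ω
          - (Tset i j I n).indicator (1 : Ω → ℝ) ω
          + Xw i I n ω * (Tset i j I n).indicator (1 : Ω → ℝ) ω * I 2 n ω
          - Xw i I n ω * (Tset i j I n).indicator (1 : Ω → ℝ) ω * I 1 n ω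
          + Yw j I n ω * (Tset i j I n).indicator (1 : Ω → ℝ) ω * I 1 n ω
          - Yw j I n ω * (Tset i j I n).indicator (1 : Ω → ℝ) ω * I 0 n ω) ∂μ) + ∫ ω, ((Tset i j I n).indicator (1 : Ω → ℝ) ω * I 1 n ω * I 2 n ω) ∂μ :=
    integral_add c_5 int_t5
  have step_5 : ∫ ω, (Xw i I n ω * Yw j I n ω * (Tset i j I n).indicator (1 : Ω → ℝ) ω
          - (Tset i j I n).indicator (1 : Ω → ℝ) ω
          + Xw i I n ω * (Tset i j I n).indicator (1 : Ω → ℝ) ω * I 2 n ω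
          - Xw i I n ω * (Tset i j I n).indicator (1 : Ω → ℝ) ω * I 1 n ω
          + Yw j I n ω * (Tset i j I n).indicator (1 : Ω → ℝ) ω * I 1 n ω
          - Yw j I n ω * (Tset i j I n).indicator (1 : Ω → ℝ) ω * I 0 n ω) ∂μ
      = (∫ ω, (Xw i I n ω * Yw j I n ω * (Tset i j I n).indicator (1 : Ω → ℝ) ω
          - (Tset i j I n).indicator (1 : Ω → ℝ) ω
          + Xw i I n ω * (Tset i j I n).indicator (1 : Ω → ℝ) ω * I 2 n ω
          - Xw i I n ω * (Tset i j I n).indicator (1 : Ω → ℝ) ω * I 1 n ω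
          + Yw j I n ω * (Tset i j I n).indicator (1 : Ω → ℝ) ω * I 1 n ω) ∂μ) - ∫ ω, (Yw j I n ω * (Tset i j I n).indicator (1 : Ω → ℝ) ω * I 0 n ω) ∂μ :=
    integral_sub c_4 int_t4
  have step_4 : ∫ ω, (Xw i I n ω * Yw j I n ω * (Tset i j I n).indicator (1 : Ω → ℝ) ω
          - (Tset i j I n).indicator (1 : Ω → ℝ) ω
          + Xw i I n ω * (Tset i j I n).indicator (1 : Ω → ℝ) ω * I 2 n ω
          - Xw i I n ω * (Tset i j I n).indicator (1 : Ω → ℝ) ω * I 1 n ω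
          + Yw j I n ω * (Tset i j I n).indicator (1 : Ω → ℝ) ω * I 1 n ω) ∂μ
      = (∫ ω, (Xw i I n ω * Yw j I n ω * (Tset i j I n).indicator (1 : Ω → ℝ) ω
          - (Tset i j I n).indicator (1 : Ω → ℝ) ω
          + Xw i I n ω * (Tset i j I n).indicator (1 : Ω → ℝ) ω * I 2 n ω
          - Xw i I n ω * (Tset i j I n).indicator (1 : Ω → ℝ) ω * I 1 n ω) ∂μ) + ∫ ω, (Yw j I n ω * (Tset i j I n).indicator (1 : Ω → ℝ) ω * I 1 n ω) ∂μ :=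
    integral_add c_3 int_t3
  have step_3 : ∫ ω, (Xw i I n ω * Yw j I n ω * (Tset i j I n).indicator (1 : Ω → ℝ) ω
          - (Tset i j I n).indicator (1 : Ω → ℝ) ω
          + Xw i I n ω * (Tset i j I n).indicator (1 : Ω → ℝ) ω * I 2 n ω
          - Xw i I n ω * (Tset i j I n).indicator (1 : Ω → ℝ) ω * I 1 n ω) ∂μ
      = (∫ ω, (Xw i I n ω * Yw j I n ω * (Tset i j I n).indicator (1 : Ω → ℝ) ω
          - (Tset i j I n).indicator (1 : Ω → ℝ) ω
          + Xw i I n ω * (Tset i j I n).indicator (1 : Ω → ℝ) ω * I 2 n ω) ∂μ) - ∫ ω, (Xw i I n ω * (Tset i j I n).indicator (1 : Ω → ℝ) ω * I 1 n ω) ∂μ :=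
    integral_sub c_2 int_t2
  have step_2 : ∫ ω, (Xw i I n ω * Yw j I n ω * (Tset i j I n).indicator (1 : Ω → ℝ) ω
          - (Tset i j I n).indicator (1 : Ω → ℝ) ω
          + Xw i I n ω * (Tset i j I n).indicator (1 : Ω → ℝ) ω * I 2 n ω) ∂μ
      = (∫ ω, (Xw i I n ω * Yw j I n ω * (Tset i j I n).indicator (1 : Ω → ℝ) ω
          - (Tset i j I n).indicator (1 : Ω → ℝ) ω) ∂μ) + ∫ ω, (Xw i I n ω * (Tset i j I n).indicator (1 : Ω → ℝ) ω * I 2 n ω) ∂μ :=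
    integral_add c_1 int_t1
  have step_1 : ∫ ω, (Xw i I n ω * Yw j I n ω * (Tset i j I n).indicator (1 : Ω → ℝ) ω
          - (Tset i j I n).indicator (1 : Ω → ℝ) ω) ∂μ
      = (∫ ω, (Xw i I n ω * Yw j I n ω * (Tset i j I n).indicator (1 : Ω → ℝ) ω) ∂μ) - ∫ ω, ((Tset i j I n).indicator (1 : Ω → ℝ) ω) ∂μ :=
    integral_sub c_0 int_h
  rw [step_8, step_7, step_6, step_5, step_4, step_3, step_2, step_1]
  rw [z1, z2, z3, z4, z5, z6, z7, integral_indicator_one (measSet_Tset hmeas i j n), measureReal_def]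
  ring

lemma step_G (hmeas : ∀ a k, Measurable (I a k))
    (hindep : iIndepFun (β := fun _ : Fin 3 × ℕ => ℝ)
      (fun p ω => I p.1 p.2 ω) μ)
    (hrad : ∀ a k, μ {ω | I a k ω = 1} = 1 / 2 ∧ μ {ω | I a k ω = -1} = 1 / 2)
    (i j n : ℕ) :
    ∫ ω, Xw i I (n + 1) ω * Yw j I (n + 1) ω * (Xw i I (n + 1) ω + Yw j I (n + 1) ω) *
        (Tset i j I n).indicator (1 : Ω → ℝ) ω ∂μ
      = ∫ ω, Xw i I n ω * Yw j I n ω * (Xw i I n ω + Yw j I n ω) *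
          (Tset i j I n).indicator (1 : Ω → ℝ) ω ∂μ := by
  have hpm := ae_pm hmeas hrad
  have hXp : Measurable[pastSA I (pastn n)] (fun ω => Xw i I n ω) :=
    measurable_Xw_past i I le_rfl
  have hYp : Measurable[pastSA I (pastn n)] (fun ω => Yw j I n ω) :=
    measurable_Yw_past j I le_rfl
  have hhp : Measurable[pastSA I (pastn n)] ((Tset i j I n).indicator (1 : Ω → ℝ)) :=
    meas_ind_past i j n
  have hXa : Measurable (fun ω => Xw i I n ω) := meas_Xw_amb hmeas i n
  have hYa : Measurable (fun ω => Yw j I n ω) := meas_Yw_amb hmeas j n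
  have hha : Measurable ((Tset i j I n).indicator (1 : Ω → ℝ)) := meas_ind_amb hmeas i j n
  have hv1 : Measurable[pastSA I (pastn n ∪ {((1 : Fin 3), n)})] (I 1 n) :=
    measurable_pastSA_I (Set.mem_union_right _ rfl)
  have hu0 : Measurable[pastSA I (pastn n ∪ {((0 : Fin 3), n)})] (I 0 n) :=
    measurable_pastSA_I (Set.mem_union_right _ rfl)
  have hmono1 : pastSA I (pastn n) ≤ pastSA I (pastn n ∪ {((1 : Fin 3), n)}) :=
    pastSA_mono Set.subset_union_left
  have hmono0 : pastSA I (pastn n) ≤ pastSA I (pastn n ∪ {((0 : Fin 3), n)}) :=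
    pastSA_mono Set.subset_union_left
  have key : (fun ω => Xw i I (n + 1) ω * Yw j I (n + 1) ω *
        (Xw i I (n + 1) ω + Yw j I (n + 1) ω) * (Tset i j I n).indicator (1 : Ω → ℝ) ω)
      =ᵐ[μ] (fun ω => Xw i I n ω * Yw j I n ω * (Xw i I n ω + Yw j I n ω) * (Tset i j I n).indicator (1 : Ω → ℝ) ω
          + Xw i I n ω * Xw i I n ω * (Tset i j I n).indicator (1 : Ω → ℝ) ω * I 2 n ω
          - Xw i I n ω * Xw i I n ω * (Tset i j I n).indicator (1 : Ω → ℝ) ω * I 1 n ω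
          + Yw j I n ω * Yw j I n ω * (Tset i j I n).indicator (1 : Ω → ℝ) ω * I 1 n ω
          - Yw j I n ω * Yw j I n ω * (Tset i j I n).indicator (1 : Ω → ℝ) ω * I 0 n ω
          + 2 * (Xw i I n ω * Yw j I n ω) * (Tset i j I n).indicator (1 : Ω → ℝ) ω * I 2 n ω
          - 2 * (Xw i I n ω * Yw j I n ω) * (Tset i j I n).indicator (1 : Ω → ℝ) ω * I 0 n ω
          - 2 * Xw i I n ω * (Tset i j I n).indicator (1 : Ω → ℝ) ω * I 0 n ω * I 2 n ω
          + 2 * Xw i I n ω * (Tset i j I n).indicator (1 : Ω → ℝ) ω * I 0 n ω * I 1 n ω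
          + 2 * Yw j I n ω * (Tset i j I n).indicator (1 : Ω → ℝ) ω * I 1 n ω * I 2 n ω
          - 2 * Yw j I n ω * (Tset i j I n).indicator (1 : Ω → ℝ) ω * I 0 n ω * I 2 n ω) := by
    filter_upwards [hpm] with ω hω
    rw [Xw_succ, Yw_succ]
    rcases hω 0 n with h0 | h0 <;> rcases hω 1 n with h1 | h1 <;> rcases hω 2 n with h2 | h2 <;>
      rw [h0, h1, h2] <;> ring
  rw [integral_congr_ae key]
  have z1 : ∫ ω, Xw i I n ω * Xw i I n ω * (Tset i j I n).indicator (1 : Ω → ℝ) ω * I 2 n ω ∂μ = 0 := by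
    refine integral_mul_fresh hmeas hindep hrad (not_mem_pastn 2 n)
      (((hXp.mul hXp).mul hhp)) (C := (2 * (i:ℝ) + 2 * n) * (2 * (i:ℝ) + 2 * n) * 1) ?_
    filter_upwards [hpm] with ω hω
    exact abs_mul_le (abs_mul_le ((abs_Xw_le hω n)) (abs_Xw_le hω n)) (abs_indicator_one_le _ ω)
  have int_t1 : Integrable (fun ω => Xw i I n ω * Xw i I n ω * (Tset i j I n).indicator (1 : Ω → ℝ) ω * I 2 n ω) μ := by
    refine integrable_of_bdd_s3 (C := (2 * (i:ℝ) + 2 * n) * (2 * (i:ℝ) + 2 * n) * 1 * 1) ((((hXa.mul hXa).mul hha).mul (hmeas 2 n))).aestronglyMeasurable ?_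
    filter_upwards [hpm] with ω hω
    exact abs_mul_le (abs_mul_le (abs_mul_le ((abs_Xw_le hω n)) (abs_Xw_le hω n)) (abs_indicator_one_le _ ω)) (abs_pm_le (hω 2 n))
  have z2 : ∫ ω, Xw i I n ω * Xw i I n ω * (Tset i j I n).indicator (1 : Ω → ℝ) ω * I 1 n ω ∂μ = 0 := by
    refine integral_mul_fresh hmeas hindep hrad (not_mem_pastn 1 n)
      (((hXp.mul hXp).mul hhp)) (C := (2 * (i:ℝ) + 2 * n) * (2 * (i:ℝ) + 2 * n) * 1) ?_
    filter_upwards [hpm] with ω hω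
    exact abs_mul_le (abs_mul_le ((abs_Xw_le hω n)) (abs_Xw_le hω n)) (abs_indicator_one_le _ ω)
  have int_t2 : Integrable (fun ω => Xw i I n ω * Xw i I n ω * (Tset i j I n).indicator (1 : Ω → ℝ) ω * I 1 n ω) μ := by
    refine integrable_of_bdd_s3 (C := (2 * (i:ℝ) + 2 * n) * (2 * (i:ℝ) + 2 * n) * 1 * 1) ((((hXa.mul hXa).mul hha).mul (hmeas 1 n))).aestronglyMeasurable ?_
    filter_upwards [hpm] with ω hω
    exact abs_mul_le (abs_mul_le (abs_mul_le ((abs_Xw_le hω n)) (abs_Xw_le hω n)) (abs_indicator_one_le _ ω)) (abs_pm_le (hω 1 n))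
  have z3 : ∫ ω, Yw j I n ω * Yw j I n ω * (Tset i j I n).indicator (1 : Ω → ℝ) ω * I 1 n ω ∂μ = 0 := by
    refine integral_mul_fresh hmeas hindep hrad (not_mem_pastn 1 n)
      (((hYp.mul hYp).mul hhp)) (C := (2 * (j:ℝ) + 2 * n) * (2 * (j:ℝ) + 2 * n) * 1) ?_
    filter_upwards [hpm] with ω hω
    exact abs_mul_le (abs_mul_le ((abs_Yw_le hω n)) (abs_Yw_le hω n)) (abs_indicator_one_le _ ω)
  have int_t3 : Integrable (fun ω => Yw j I n ω * Yw j I n ω * (Tset i j I n).indicator (1 : Ω → ℝ) ω * I 1 n ω) μ := by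
    refine integrable_of_bdd_s3 (C := (2 * (j:ℝ) + 2 * n) * (2 * (j:ℝ) + 2 * n) * 1 * 1) ((((hYa.mul hYa).mul hha).mul (hmeas 1 n))).aestronglyMeasurable ?_
    filter_upwards [hpm] with ω hω
    exact abs_mul_le (abs_mul_le (abs_mul_le ((abs_Yw_le hω n)) (abs_Yw_le hω n)) (abs_indicator_one_le _ ω)) (abs_pm_le (hω 1 n))
  have z4 : ∫ ω, Yw j I n ω * Yw j I n ω * (Tset i j I n).indicator (1 : Ω → ℝ) ω * I 0 n ω ∂μ = 0 := by
    refine integral_mul_fresh hmeas hindep hrad (not_mem_pastn 0 n)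
      (((hYp.mul hYp).mul hhp)) (C := (2 * (j:ℝ) + 2 * n) * (2 * (j:ℝ) + 2 * n) * 1) ?_
    filter_upwards [hpm] with ω hω
    exact abs_mul_le (abs_mul_le ((abs_Yw_le hω n)) (abs_Yw_le hω n)) (abs_indicator_one_le _ ω)
  have int_t4 : Integrable (fun ω => Yw j I n ω * Yw j I n ω * (Tset i j I n).indicator (1 : Ω → ℝ) ω * I 0 n ω) μ := by
    refine integrable_of_bdd_s3 (C := (2 * (j:ℝ) + 2 * n) * (2 * (j:ℝ) + 2 * n) * 1 * 1) ((((hYa.mul hYa).mul hha).mul (hmeas 0 n))).aestronglyMeasurable ?_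
    filter_upwards [hpm] with ω hω
    exact abs_mul_le (abs_mul_le (abs_mul_le ((abs_Yw_le hω n)) (abs_Yw_le hω n)) (abs_indicator_one_le _ ω)) (abs_pm_le (hω 0 n))
  have z5 : ∫ ω, 2 * (Xw i I n ω * Yw j I n ω) * (Tset i j I n).indicator (1 : Ω → ℝ) ω * I 2 n ω ∂μ = 0 := by
    refine integral_mul_fresh hmeas hindep hrad (not_mem_pastn 2 n)
      (((measurable_const.mul (hXp.mul hYp)).mul hhp)) (C := 2 * ((2 * (i:ℝ) + 2 * n) * (2 * (j:ℝ) + 2 * n)) * 1) ?_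
    filter_upwards [hpm] with ω hω
    exact abs_mul_le (abs_mul_le ((show |(2:ℝ)| ≤ 2 by norm_num)) (abs_mul_le (abs_Xw_le hω n) (abs_Yw_le hω n))) (abs_indicator_one_le _ ω)
  have int_t5 : Integrable (fun ω => 2 * (Xw i I n ω * Yw j I n ω) * (Tset i j I n).indicator (1 : Ω → ℝ) ω * I 2 n ω) μ := by
    refine integrable_of_bdd_s3 (C := 2 * ((2 * (i:ℝ) + 2 * n) * (2 * (j:ℝ) + 2 * n)) * 1 * 1) ((((measurable_const.mul (hXa.mul hYa)).mul hha).mul (hmeas 2 n))).aestronglyMeasurable ?_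
    filter_upwards [hpm] with ω hω
    exact abs_mul_le (abs_mul_le (abs_mul_le ((show |(2:ℝ)| ≤ 2 by norm_num)) (abs_mul_le (abs_Xw_le hω n) (abs_Yw_le hω n))) (abs_indicator_one_le _ ω)) (abs_pm_le (hω 2 n))
  have z6 : ∫ ω, 2 * (Xw i I n ω * Yw j I n ω) * (Tset i j I n).indicator (1 : Ω → ℝ) ω * I 0 n ω ∂μ = 0 := by
    refine integral_mul_fresh hmeas hindep hrad (not_mem_pastn 0 n)
      (((measurable_const.mul (hXp.mul hYp)).mul hhp)) (C := 2 * ((2 * (i:ℝ) + 2 * n) * (2 * (j:ℝ) + 2 * n)) * 1) ?_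
    filter_upwards [hpm] with ω hω
    exact abs_mul_le (abs_mul_le ((show |(2:ℝ)| ≤ 2 by norm_num)) (abs_mul_le (abs_Xw_le hω n) (abs_Yw_le hω n))) (abs_indicator_one_le _ ω)
  have int_t6 : Integrable (fun ω => 2 * (Xw i I n ω * Yw j I n ω) * (Tset i j I n).indicator (1 : Ω → ℝ) ω * I 0 n ω) μ := by
    refine integrable_of_bdd_s3 (C := 2 * ((2 * (i:ℝ) + 2 * n) * (2 * (j:ℝ) + 2 * n)) * 1 * 1) ((((measurable_const.mul (hXa.mul hYa)).mul hha).mul (hmeas 0 n))).aestronglyMeasurable ?_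
    filter_upwards [hpm] with ω hω
    exact abs_mul_le (abs_mul_le (abs_mul_le ((show |(2:ℝ)| ≤ 2 by norm_num)) (abs_mul_le (abs_Xw_le hω n) (abs_Yw_le hω n))) (abs_indicator_one_le _ ω)) (abs_pm_le (hω 0 n))
  have z7 : ∫ ω, 2 * Xw i I n ω * (Tset i j I n).indicator (1 : Ω → ℝ) ω * I 0 n ω * I 2 n ω ∂μ = 0 := by
    refine integral_mul_fresh hmeas hindep hrad (not_mem_pastn_union (show (2 : Fin 3) ≠ 0 by decide) n)
      ((((measurable_const.mul (hXp.mono hmono0 le_rfl)).mul (hhp.mono hmono0 le_rfl)).mul hu0)) (C := 2 * (2 * (i:ℝ) + 2 * n) * 1 * 1) ?_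
    filter_upwards [hpm] with ω hω
    exact abs_mul_le (abs_mul_le (abs_mul_le ((show |(2:ℝ)| ≤ 2 by norm_num)) (abs_Xw_le hω n)) (abs_indicator_one_le _ ω)) (abs_pm_le (hω 0 n))
  have int_t7 : Integrable (fun ω => 2 * Xw i I n ω * (Tset i j I n).indicator (1 : Ω → ℝ) ω * I 0 n ω * I 2 n ω) μ := by
    refine integrable_of_bdd_s3 (C := 2 * (2 * (i:ℝ) + 2 * n) * 1 * 1 * 1) (((((measurable_const.mul hXa).mul hha).mul (hmeas 0 n)).mul (hmeas 2 n))).aestronglyMeasurable ?_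
    filter_upwards [hpm] with ω hω
    exact abs_mul_le (abs_mul_le (abs_mul_le (abs_mul_le ((show |(2:ℝ)| ≤ 2 by norm_num)) (abs_Xw_le hω n)) (abs_indicator_one_le _ ω)) (abs_pm_le (hω 0 n))) (abs_pm_le (hω 2 n))
  have z8 : ∫ ω, 2 * Xw i I n ω * (Tset i j I n).indicator (1 : Ω → ℝ) ω * I 0 n ω * I 1 n ω ∂μ = 0 := by
    refine integral_mul_fresh hmeas hindep hrad (not_mem_pastn_union (show (1 : Fin 3) ≠ 0 by decide) n)
      ((((measurable_const.mul (hXp.mono hmono0 le_rfl)).mul (hhp.mono hmono0 le_rfl)).mul hu0)) (C := 2 * (2 * (i:ℝ) + 2 * n) * 1 * 1) ?_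
    filter_upwards [hpm] with ω hω
    exact abs_mul_le (abs_mul_le (abs_mul_le ((show |(2:ℝ)| ≤ 2 by norm_num)) (abs_Xw_le hω n)) (abs_indicator_one_le _ ω)) (abs_pm_le (hω 0 n))
  have int_t8 : Integrable (fun ω => 2 * Xw i I n ω * (Tset i j I n).indicator (1 : Ω → ℝ) ω * I 0 n ω * I 1 n ω) μ := by
    refine integrable_of_bdd_s3 (C := 2 * (2 * (i:ℝ) + 2 * n) * 1 * 1 * 1) (((((measurable_const.mul hXa).mul hha).mul (hmeas 0 n)).mul (hmeas 1 n))).aestronglyMeasurable ?_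
    filter_upwards [hpm] with ω hω
    exact abs_mul_le (abs_mul_le (abs_mul_le (abs_mul_le ((show |(2:ℝ)| ≤ 2 by norm_num)) (abs_Xw_le hω n)) (abs_indicator_one_le _ ω)) (abs_pm_le (hω 0 n))) (abs_pm_le (hω 1 n))
  have z9 : ∫ ω, 2 * Yw j I n ω * (Tset i j I n).indicator (1 : Ω → ℝ) ω * I 1 n ω * I 2 n ω ∂μ = 0 := by
    refine integral_mul_fresh hmeas hindep hrad (not_mem_pastn_union (show (2 : Fin 3) ≠ 1 by decide) n)
      ((((measurable_const.mul (hYp.mono hmono1 le_rfl)).mul (hhp.mono hmono1 le_rfl)).mul hv1)) (C := 2 * (2 * (j:ℝ) + 2 * n) * 1 * 1) ?_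
    filter_upwards [hpm] with ω hω
    exact abs_mul_le (abs_mul_le (abs_mul_le ((show |(2:ℝ)| ≤ 2 by norm_num)) (abs_Yw_le hω n)) (abs_indicator_one_le _ ω)) (abs_pm_le (hω 1 n))
  have int_t9 : Integrable (fun ω => 2 * Yw j I n ω * (Tset i j I n).indicator (1 : Ω → ℝ) ω * I 1 n ω * I 2 n ω) μ := by
    refine integrable_of_bdd_s3 (C := 2 * (2 * (j:ℝ) + 2 * n) * 1 * 1 * 1) (((((measurable_const.mul hYa).mul hha).mul (hmeas 1 n)).mul (hmeas 2 n))).aestronglyMeasurable ?_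
    filter_upwards [hpm] with ω hω
    exact abs_mul_le (abs_mul_le (abs_mul_le (abs_mul_le ((show |(2:ℝ)| ≤ 2 by norm_num)) (abs_Yw_le hω n)) (abs_indicator_one_le _ ω)) (abs_pm_le (hω 1 n))) (abs_pm_le (hω 2 n))
  have z10 : ∫ ω, 2 * Yw j I n ω * (Tset i j I n).indicator (1 : Ω → ℝ) ω * I 0 n ω * I 2 n ω ∂μ = 0 := by
    refine integral_mul_fresh hmeas hindep hrad (not_mem_pastn_union (show (2 : Fin 3) ≠ 0 by decide) n)
      ((((measurable_const.mul (hYp.mono hmono0 le_rfl)).mul (hhp.mono hmono0 le_rfl)).mul hu0)) (C := 2 * (2 * (j:ℝ) + 2 * n) * 1 * 1) ?_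
    filter_upwards [hpm] with ω hω
    exact abs_mul_le (abs_mul_le (abs_mul_le ((show |(2:ℝ)| ≤ 2 by norm_num)) (abs_Yw_le hω n)) (abs_indicator_one_le _ ω)) (abs_pm_le (hω 0 n))
  have int_t10 : Integrable (fun ω => 2 * Yw j I n ω * (Tset i j I n).indicator (1 : Ω → ℝ) ω * I 0 n ω * I 2 n ω) μ := by
    refine integrable_of_bdd_s3 (C := 2 * (2 * (j:ℝ) + 2 * n) * 1 * 1 * 1) (((((measurable_const.mul hYa).mul hha).mul (hmeas 0 n)).mul (hmeas 2 n))).aestronglyMeasurable ?_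
    filter_upwards [hpm] with ω hω
    exact abs_mul_le (abs_mul_le (abs_mul_le (abs_mul_le ((show |(2:ℝ)| ≤ 2 by norm_num)) (abs_Yw_le hω n)) (abs_indicator_one_le _ ω)) (abs_pm_le (hω 0 n))) (abs_pm_le (hω 2 n))
  have int_b0 : Integrable (fun ω => Xw i I n ω * Yw j I n ω * (Xw i I n ω + Yw j I n ω) * (Tset i j I n).indicator (1 : Ω → ℝ) ω) μ := by
    refine integrable_of_bdd_s3 (C := (2 * (i:ℝ) + 2 * n) * (2 * (j:ℝ) + 2 * n) * ((2 * (i:ℝ) + 2 * n) + (2 * (j:ℝ) + 2 * n)) * 1) (((hXa.mul hYa).mul (hXa.add hYa)).mul hha).aestronglyMeasurable ?_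
    filter_upwards [hpm] with ω hω
    exact abs_mul_le (abs_mul_le (abs_mul_le (abs_Xw_le hω n) (abs_Yw_le hω n)) (abs_add_le_of (abs_Xw_le hω n) (abs_Yw_le hω n))) (abs_indicator_one_le _ ω)
  have c_0 := int_b0
  have c_1 := c_0.add int_t1
  have c_2 := c_1.sub int_t2
  have c_3 := c_2.add int_t3
  have c_4 := c_3.sub int_t4
  have c_5 := c_4.add int_t5
  have c_6 := c_5.sub int_t6
  have c_7 := c_6.sub int_t7
  have c_8 := c_7.add int_t8
  have c_9 := c_8.add int_t9
  have c_10 := c_9.sub int_t10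
  have step_10 : ∫ ω, (Xw i I n ω * Yw j I n ω * (Xw i I n ω + Yw j I n ω) * (Tset i j I n).indicator (1 : Ω → ℝ) ω
          + Xw i I n ω * Xw i I n ω * (Tset i j I n).indicator (1 : Ω → ℝ) ω * I 2 n ω
          - Xw i I n ω * Xw i I n ω * (Tset i j I n).indicator (1 : Ω → ℝ) ω * I 1 n ω
          + Yw j I n ω * Yw j I n ω * (Tset i j I n).indicator (1 : Ω → ℝ) ω * I 1 n ω
          - Yw j I n ω * Yw j I n ω * (Tset i j I n).indicator (1 : Ω → ℝ) ω * I 0 n ω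
          + 2 * (Xw i I n ω * Yw j I n ω) * (Tset i j I n).indicator (1 : Ω → ℝ) ω * I 2 n ω
          - 2 * (Xw i I n ω * Yw j I n ω) * (Tset i j I n).indicator (1 : Ω → ℝ) ω * I 0 n ω
          - 2 * Xw i I n ω * (Tset i j I n).indicator (1 : Ω → ℝ) ω * I 0 n ω * I 2 n ω
          + 2 * Xw i I n ω * (Tset i j I n).indicator (1 : Ω → ℝ) ω * I 0 n ω * I 1 n ω
          + 2 * Yw j I n ω * (Tset i j I n).indicator (1 : Ω → ℝ) ω * I 1 n ω * I 2 n ω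
          - 2 * Yw j I n ω * (Tset i j I n).indicator (1 : Ω → ℝ) ω * I 0 n ω * I 2 n ω) ∂μ
      = (∫ ω, (Xw i I n ω * Yw j I n ω * (Xw i I n ω + Yw j I n ω) * (Tset i j I n).indicator (1 : Ω → ℝ) ω
          + Xw i I n ω * Xw i I n ω * (Tset i j I n).indicator (1 : Ω → ℝ) ω * I 2 n ω
          - Xw i I n ω * Xw i I n ω * (Tset i j I n).indicator (1 : Ω → ℝ) ω * I 1 n ω
          + Yw j I n ω * Yw j I n ω * (Tset i j I n).indicator (1 : Ω → ℝ) ω * I 1 n ω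
          - Yw j I n ω * Yw j I n ω * (Tset i j I n).indicator (1 : Ω → ℝ) ω * I 0 n ω
          + 2 * (Xw i I n ω * Yw j I n ω) * (Tset i j I n).indicator (1 : Ω → ℝ) ω * I 2 n ω
          - 2 * (Xw i I n ω * Yw j I n ω) * (Tset i j I n).indicator (1 : Ω → ℝ) ω * I 0 n ω
          - 2 * Xw i I n ω * (Tset i j I n).indicator (1 : Ω → ℝ) ω * I 0 n ω * I 2 n ω
          + 2 * Xw i I n ω * (Tset i j I n).indicator (1 : Ω → ℝ) ω * I 0 n ω * I 1 n ω
          + 2 * Yw j I n ω * (Tset i j I n).indicator (1 : Ω → ℝ) ω * I 1 n ω * I 2 n ω) ∂μ) - ∫ ω, (2 * Yw j I n ω * (Tset i j I n).indicator (1 : Ω → ℝ) ω * I 0 n ω * I 2 n ω) ∂μ :=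
    integral_sub c_9 int_t10
  have step_9 : ∫ ω, (Xw i I n ω * Yw j I n ω * (Xw i I n ω + Yw j I n ω) * (Tset i j I n).indicator (1 : Ω → ℝ) ω
          + Xw i I n ω * Xw i I n ω * (Tset i j I n).indicator (1 : Ω → ℝ) ω * I 2 n ω
          - Xw i I n ω * Xw i I n ω * (Tset i j I n).indicator (1 : Ω → ℝ) ω * I 1 n ω
          + Yw j I n ω * Yw j I n ω * (Tset i j I n).indicator (1 : Ω → ℝ) ω * I 1 n ω
          - Yw j I n ω * Yw j I n ω * (Tset i j I n).indicator (1 : Ω → ℝ) ω * I 0 n ω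
          + 2 * (Xw i I n ω * Yw j I n ω) * (Tset i j I n).indicator (1 : Ω → ℝ) ω * I 2 n ω
          - 2 * (Xw i I n ω * Yw j I n ω) * (Tset i j I n).indicator (1 : Ω → ℝ) ω * I 0 n ω
          - 2 * Xw i I n ω * (Tset i j I n).indicator (1 : Ω → ℝ) ω * I 0 n ω * I 2 n ω
          + 2 * Xw i I n ω * (Tset i j I n).indicator (1 : Ω → ℝ) ω * I 0 n ω * I 1 n ω
          + 2 * Yw j I n ω * (Tset i j I n).indicator (1 : Ω → ℝ) ω * I 1 n ω * I 2 n ω) ∂μ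
      = (∫ ω, (Xw i I n ω * Yw j I n ω * (Xw i I n ω + Yw j I n ω) * (Tset i j I n).indicator (1 : Ω → ℝ) ω
          + Xw i I n ω * Xw i I n ω * (Tset i j I n).indicator (1 : Ω → ℝ) ω * I 2 n ω
          - Xw i I n ω * Xw i I n ω * (Tset i j I n).indicator (1 : Ω → ℝ) ω * I 1 n ω
          + Yw j I n ω * Yw j I n ω * (Tset i j I n).indicator (1 : Ω → ℝ) ω * I 1 n ω
          - Yw j I n ω * Yw j I n ω * (Tset i j I n).indicator (1 : Ω → ℝ) ω * I 0 n ω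
          + 2 * (Xw i I n ω * Yw j I n ω) * (Tset i j I n).indicator (1 : Ω → ℝ) ω * I 2 n ω
          - 2 * (Xw i I n ω * Yw j I n ω) * (Tset i j I n).indicator (1 : Ω → ℝ) ω * I 0 n ω
          - 2 * Xw i I n ω * (Tset i j I n).indicator (1 : Ω → ℝ) ω * I 0 n ω * I 2 n ω
          + 2 * Xw i I n ω * (Tset i j I n).indicator (1 : Ω → ℝ) ω * I 0 n ω * I 1 n ω) ∂μ) + ∫ ω, (2 * Yw j I n ω * (Tset i j I n).indicator (1 : Ω → ℝ) ω * I 1 n ω * I 2 n ω) ∂μ :=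
    integral_add c_8 int_t9
  have step_8 : ∫ ω, (Xw i I n ω * Yw j I n ω * (Xw i I n ω + Yw j I n ω) * (Tset i j I n).indicator (1 : Ω → ℝ) ω
          + Xw i I n ω * Xw i I n ω * (Tset i j I n).indicator (1 : Ω → ℝ) ω * I 2 n ω
          - Xw i I n ω * Xw i I n ω * (Tset i j I n).indicator (1 : Ω → ℝ) ω * I 1 n ω
          + Yw j I n ω * Yw j I n ω * (Tset i j I n).indicator (1 : Ω → ℝ) ω * I 1 n ω
          - Yw j I n ω * Yw j I n ω * (Tset i j I n).indicator (1 : Ω → ℝ) ω * I 0 n ω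
          + 2 * (Xw i I n ω * Yw j I n ω) * (Tset i j I n).indicator (1 : Ω → ℝ) ω * I 2 n ω
          - 2 * (Xw i I n ω * Yw j I n ω) * (Tset i j I n).indicator (1 : Ω → ℝ) ω * I 0 n ω
          - 2 * Xw i I n ω * (Tset i j I n).indicator (1 : Ω → ℝ) ω * I 0 n ω * I 2 n ω
          + 2 * Xw i I n ω * (Tset i j I n).indicator (1 : Ω → ℝ) ω * I 0 n ω * I 1 n ω) ∂μ
      = (∫ ω, (Xw i I n ω * Yw j I n ω * (Xw i I n ω + Yw j I n ω) * (Tset i j I n).indicator (1 : Ω → ℝ) ω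
          + Xw i I n ω * Xw i I n ω * (Tset i j I n).indicator (1 : Ω → ℝ) ω * I 2 n ω
          - Xw i I n ω * Xw i I n ω * (Tset i j I n).indicator (1 : Ω → ℝ) ω * I 1 n ω
          + Yw j I n ω * Yw j I n ω * (Tset i j I n).indicator (1 : Ω → ℝ) ω * I 1 n ω
          - Yw j I n ω * Yw j I n ω * (Tset i j I n).indicator (1 : Ω → ℝ) ω * I 0 n ω
          + 2 * (Xw i I n ω * Yw j I n ω) * (Tset i j I n).indicator (1 : Ω → ℝ) ω * I 2 n ω
          - 2 * (Xw i I n ω * Yw j I n ω) * (Tset i j I n).indicator (1 : Ω → ℝ) ω * I 0 n ω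
          - 2 * Xw i I n ω * (Tset i j I n).indicator (1 : Ω → ℝ) ω * I 0 n ω * I 2 n ω) ∂μ) + ∫ ω, (2 * Xw i I n ω * (Tset i j I n).indicator (1 : Ω → ℝ) ω * I 0 n ω * I 1 n ω) ∂μ :=
    integral_add c_7 int_t8
  have step_7 : ∫ ω, (Xw i I n ω * Yw j I n ω * (Xw i I n ω + Yw j I n ω) * (Tset i j I n).indicator (1 : Ω → ℝ) ω
          + Xw i I n ω * Xw i I n ω * (Tset i j I n).indicator (1 : Ω → ℝ) ω * I 2 n ω
          - Xw i I n ω * Xw i I n ω * (Tset i j I n).indicator (1 : Ω → ℝ) ω * I 1 n ω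
          + Yw j I n ω * Yw j I n ω * (Tset i j I n).indicator (1 : Ω → ℝ) ω * I 1 n ω
          - Yw j I n ω * Yw j I n ω * (Tset i j I n).indicator (1 : Ω → ℝ) ω * I 0 n ω
          + 2 * (Xw i I n ω * Yw j I n ω) * (Tset i j I n).indicator (1 : Ω → ℝ) ω * I 2 n ω
          - 2 * (Xw i I n ω * Yw j I n ω) * (Tset i j I n).indicator (1 : Ω → ℝ) ω * I 0 n ω
          - 2 * Xw i I n ω * (Tset i j I n).indicator (1 : Ω → ℝ) ω * I 0 n ω * I 2 n ω) ∂μ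
      = (∫ ω, (Xw i I n ω * Yw j I n ω * (Xw i I n ω + Yw j I n ω) * (Tset i j I n).indicator (1 : Ω → ℝ) ω
          + Xw i I n ω * Xw i I n ω * (Tset i j I n).indicator (1 : Ω → ℝ) ω * I 2 n ω
          - Xw i I n ω * Xw i I n ω * (Tset i j I n).indicator (1 : Ω → ℝ) ω * I 1 n ω
          + Yw j I n ω * Yw j I n ω * (Tset i j I n).indicator (1 : Ω → ℝ) ω * I 1 n ω
          - Yw j I n ω * Yw j I n ω * (Tset i j I n).indicator (1 : Ω → ℝ) ω * I 0 n ω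
          + 2 * (Xw i I n ω * Yw j I n ω) * (Tset i j I n).indicator (1 : Ω → ℝ) ω * I 2 n ω
          - 2 * (Xw i I n ω * Yw j I n ω) * (Tset i j I n).indicator (1 : Ω → ℝ) ω * I 0 n ω) ∂μ) - ∫ ω, (2 * Xw i I n ω * (Tset i j I n).indicator (1 : Ω → ℝ) ω * I 0 n ω * I 2 n ω) ∂μ :=
    integral_sub c_6 int_t7
  have step_6 : ∫ ω, (Xw i I n ω * Yw j I n ω * (Xw i I n ω + Yw j I n ω) * (Tset i j I n).indicator (1 : Ω → ℝ) ω
          + Xw i I n ω * Xw i I n ω * (Tset i j I n).indicator (1 : Ω → ℝ) ω * I 2 n ω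
          - Xw i I n ω * Xw i I n ω * (Tset i j I n).indicator (1 : Ω → ℝ) ω * I 1 n ω
          + Yw j I n ω * Yw j I n ω * (Tset i j I n).indicator (1 : Ω → ℝ) ω * I 1 n ω
          - Yw j I n ω * Yw j I n ω * (Tset i j I n).indicator (1 : Ω → ℝ) ω * I 0 n ω
          + 2 * (Xw i I n ω * Yw j I n ω) * (Tset i j I n).indicator (1 : Ω → ℝ) ω * I 2 n ω
          - 2 * (Xw i I n ω * Yw j I n ω) * (Tset i j I n).indicator (1 : Ω → ℝ) ω * I 0 n ω) ∂μ
      = (∫ ω, (Xw i I n ω * Yw j I n ω * (Xw i I n ω + Yw j I n ω) * (Tset i j I n).indicator (1 : Ω → ℝ) ω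
          + Xw i I n ω * Xw i I n ω * (Tset i j I n).indicator (1 : Ω → ℝ) ω * I 2 n ω
          - Xw i I n ω * Xw i I n ω * (Tset i j I n).indicator (1 : Ω → ℝ) ω * I 1 n ω
          + Yw j I n ω * Yw j I n ω * (Tset i j I n).indicator (1 : Ω → ℝ) ω * I 1 n ω
          - Yw j I n ω * Yw j I n ω * (Tset i j I n).indicator (1 : Ω → ℝ) ω * I 0 n ω
          + 2 * (Xw i I n ω * Yw j I n ω) * (Tset i j I n).indicator (1 : Ω → ℝ) ω * I 2 n ω) ∂μ) - ∫ ω, (2 * (Xw i I n ω * Yw j I n ω) * (Tset i j I n).indicator (1 : Ω → ℝ) ω * I 0 n ω) ∂μ :=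
    integral_sub c_5 int_t6
  have step_5 : ∫ ω, (Xw i I n ω * Yw j I n ω * (Xw i I n ω + Yw j I n ω) * (Tset i j I n).indicator (1 : Ω → ℝ) ω
          + Xw i I n ω * Xw i I n ω * (Tset i j I n).indicator (1 : Ω → ℝ) ω * I 2 n ω
          - Xw i I n ω * Xw i I n ω * (Tset i j I n).indicator (1 : Ω → ℝ) ω * I 1 n ω
          + Yw j I n ω * Yw j I n ω * (Tset i j I n).indicator (1 : Ω → ℝ) ω * I 1 n ω
          - Yw j I n ω * Yw j I n ω * (Tset i j I n).indicator (1 : Ω → ℝ) ω * I 0 n ω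
          + 2 * (Xw i I n ω * Yw j I n ω) * (Tset i j I n).indicator (1 : Ω → ℝ) ω * I 2 n ω) ∂μ
      = (∫ ω, (Xw i I n ω * Yw j I n ω * (Xw i I n ω + Yw j I n ω) * (Tset i j I n).indicator (1 : Ω → ℝ) ω
          + Xw i I n ω * Xw i I n ω * (Tset i j I n).indicator (1 : Ω → ℝ) ω * I 2 n ω
          - Xw i I n ω * Xw i I n ω * (Tset i j I n).indicator (1 : Ω → ℝ) ω * I 1 n ω
          + Yw j I n ω * Yw j I n ω * (Tset i j I n).indicator (1 : Ω → ℝ) ω * I 1 n ω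
          - Yw j I n ω * Yw j I n ω * (Tset i j I n).indicator (1 : Ω → ℝ) ω * I 0 n ω) ∂μ) + ∫ ω, (2 * (Xw i I n ω * Yw j I n ω) * (Tset i j I n).indicator (1 : Ω → ℝ) ω * I 2 n ω) ∂μ :=
    integral_add c_4 int_t5
  have step_4 : ∫ ω, (Xw i I n ω * Yw j I n ω * (Xw i I n ω + Yw j I n ω) * (Tset i j I n).indicator (1 : Ω → ℝ) ω
          + Xw i I n ω * Xw i I n ω * (Tset i j I n).indicator (1 : Ω → ℝ) ω * I 2 n ω
          - Xw i I n ω * Xw i I n ω * (Tset i j I n).indicator (1 : Ω → ℝ) ω * I 1 n ω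
          + Yw j I n ω * Yw j I n ω * (Tset i j I n).indicator (1 : Ω → ℝ) ω * I 1 n ω
          - Yw j I n ω * Yw j I n ω * (Tset i j I n).indicator (1 : Ω → ℝ) ω * I 0 n ω) ∂μ
      = (∫ ω, (Xw i I n ω * Yw j I n ω * (Xw i I n ω + Yw j I n ω) * (Tset i j I n).indicator (1 : Ω → ℝ) ω
          + Xw i I n ω * Xw i I n ω * (Tset i j I n).indicator (1 : Ω → ℝ) ω * I 2 n ω
          - Xw i I n ω * Xw i I n ω * (Tset i j I n).indicator (1 : Ω → ℝ) ω * I 1 n ω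
          + Yw j I n ω * Yw j I n ω * (Tset i j I n).indicator (1 : Ω → ℝ) ω * I 1 n ω) ∂μ) - ∫ ω, (Yw j I n ω * Yw j I n ω * (Tset i j I n).indicator (1 : Ω → ℝ) ω * I 0 n ω) ∂μ :=
    integral_sub c_3 int_t4
  have step_3 : ∫ ω, (Xw i I n ω * Yw j I n ω * (Xw i I n ω + Yw j I n ω) * (Tset i j I n).indicator (1 : Ω → ℝ) ω
          + Xw i I n ω * Xw i I n ω * (Tset i j I n).indicator (1 : Ω → ℝ) ω * I 2 n ω
          - Xw i I n ω * Xw i I n ω * (Tset i j I n).indicator (1 : Ω → ℝ) ω * I 1 n ω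
          + Yw j I n ω * Yw j I n ω * (Tset i j I n).indicator (1 : Ω → ℝ) ω * I 1 n ω) ∂μ
      = (∫ ω, (Xw i I n ω * Yw j I n ω * (Xw i I n ω + Yw j I n ω) * (Tset i j I n).indicator (1 : Ω → ℝ) ω
          + Xw i I n ω * Xw i I n ω * (Tset i j I n).indicator (1 : Ω → ℝ) ω * I 2 n ω
          - Xw i I n ω * Xw i I n ω * (Tset i j I n).indicator (1 : Ω → ℝ) ω * I 1 n ω) ∂μ) + ∫ ω, (Yw j I n ω * Yw j I n ω * (Tset i j I n).indicator (1 : Ω → ℝ) ω * I 1 n ω) ∂μ :=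
    integral_add c_2 int_t3
  have step_2 : ∫ ω, (Xw i I n ω * Yw j I n ω * (Xw i I n ω + Yw j I n ω) * (Tset i j I n).indicator (1 : Ω → ℝ) ω
          + Xw i I n ω * Xw i I n ω * (Tset i j I n).indicator (1 : Ω → ℝ) ω * I 2 n ω
          - Xw i I n ω * Xw i I n ω * (Tset i j I n).indicator (1 : Ω → ℝ) ω * I 1 n ω) ∂μ
      = (∫ ω, (Xw i I n ω * Yw j I n ω * (Xw i I n ω + Yw j I n ω) * (Tset i j I n).indicator (1 : Ω → ℝ) ω
          + Xw i I n ω * Xw i I n ω * (Tset i j I n).indicator (1 : Ω → ℝ) ω * I 2 n ω) ∂μ) - ∫ ω, (Xw i I n ω * Xw i I n ω * (Tset i j I n).indicator (1 : Ω → ℝ) ω * I 1 n ω) ∂μ :=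
    integral_sub c_1 int_t2
  have step_1 : ∫ ω, (Xw i I n ω * Yw j I n ω * (Xw i I n ω + Yw j I n ω) * (Tset i j I n).indicator (1 : Ω → ℝ) ω
          + Xw i I n ω * Xw i I n ω * (Tset i j I n).indicator (1 : Ω → ℝ) ω * I 2 n ω) ∂μ
      = (∫ ω, (Xw i I n ω * Yw j I n ω * (Xw i I n ω + Yw j I n ω) * (Tset i j I n).indicator (1 : Ω → ℝ) ω) ∂μ) + ∫ ω, (Xw i I n ω * Xw i I n ω * (Tset i j I n).indicator (1 : Ω → ℝ) ω * I 2 n ω) ∂μ :=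
    integral_add c_0 int_t1
  rw [step_10, step_9, step_8, step_7, step_6, step_5, step_4, step_3, step_2, step_1]
  rw [z1, z2, z3, z4, z5, z6, z7, z8, z9, z10]
  ring

end StepAB
section Final
set_option linter.unusedSectionVars false
set_option maxHeartbeats 1000000

variable {Ω : Type*} [MeasurableSpace Ω] {μ : Measure Ω} [IsProbabilityMeasure μ]
  {I : Fin 3 → ℕ → Ω → ℝ}

/-- the collision time is `> n` iff no collision happened in the first `n` steps -/
lemma tau_gt_iff (i j n : ℕ) (ω : Ω) :
    (n : ℝ≥0∞) < collisionTime i j (I 0) (I 1) (I 2) ω ↔ ω ∈ Tset i j I n := by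
  constructor
  · intro h m hm1 hmn
    intro heq
    have hle : collisionTime i j (I 0) (I 1) (I 2) ω ≤ (m : ℝ≥0∞) :=
      iInf₂_le m ⟨hm1, heq⟩
    have : (n : ℝ≥0∞) < (m : ℝ≥0∞) := lt_of_lt_of_le h hle
    have : n < m := by exact_mod_cast this
    omega
  · intro hT
    have hge : ((n + 1 : ℕ) : ℝ≥0∞) ≤ collisionTime i j (I 0) (I 1) (I 2) ω := by
      refine le_iInf fun m => le_iInf fun hm => ?_
      rcases hm with ⟨hm1, heq⟩
      have : ¬ m ≤ n := fun hmn => hT m hm1 hmn heq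
      exact_mod_cast Nat.succ_le_of_lt (by omega)
    refine lt_of_lt_of_le ?_ hge
    exact_mod_cast Nat.lt_succ_self n

lemma tau_eq_tsum (i j : ℕ) (ω : Ω) :
    collisionTime i j (I 0) (I 1) (I 2) ω
      = ∑' n : ℕ, if (n : ℝ≥0∞) < collisionTime i j (I 0) (I 1) (I 2) ω then 1 else 0 := by
  have hform : (∃ m : ℕ, collisionTime i j (I 0) (I 1) (I 2) ω = m) ∨
      collisionTime i j (I 0) (I 1) (I 2) ω = ⊤ := by
    by_cases hne : ∃ n : ℕ, 1 ≤ n ∧ distLM i (I 0) (I 1) n ω * distMR j (I 1) (I 2) n ω = 0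
    · left
      refine ⟨Nat.find hne, le_antisymm (iInf₂_le (Nat.find hne) (Nat.find_spec hne)) ?_⟩
      refine le_iInf fun m => le_iInf fun hm => ?_
      exact_mod_cast Nat.find_min' hne hm
    · right
      push_neg at hne
      have hthis : ∀ n : ℕ, ¬ (1 ≤ n ∧ distLM i (I 0) (I 1) n ω * distMR j (I 1) (I 2) n ω = 0) := by
        intro n hn
        exact (hne n hn.1) hn.2
      have h2 : ∀ n : ℕ, (⨅ (_ : 1 ≤ n ∧ distLM i (I 0) (I 1) n ω * distMR j (I 1) (I 2) n ω = 0),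
          (n : ℝ≥0∞)) = ⊤ := fun n => iInf_neg (hthis n)
      rw [collisionTime]
      simp only [h2, iInf_top]
  rcases hform with ⟨m, hm⟩ | hm
  · rw [hm]
    have hcond : ∀ n : ℕ, ((n : ℝ≥0∞) < (m : ℝ≥0∞)) ↔ n < m := fun n => Nat.cast_lt
    have : ∀ n : ℕ, (if (n : ℝ≥0∞) < (m : ℝ≥0∞) then (1 : ℝ≥0∞) else 0)
        = if n < m then 1 else 0 := fun n => by simp [hcond n]
    rw [tsum_congr this]
    rw [tsum_eq_sum (s := Finset.range m) (fun n hn => by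
      simp [Finset.mem_range] at hn
      simp [Nat.not_lt.mpr hn])]
    rw [Finset.sum_congr rfl (fun n hn => if_pos (Finset.mem_range.mp hn))]
    simp
  · rw [hm]
    have hthis : ∀ n : ℕ, (if (n : ℝ≥0∞) < (⊤ : ℝ≥0∞) then (1 : ℝ≥0∞) else 0) = 1 := fun n =>
      if_pos (ENNReal.natCast_lt_top n)
    rw [tsum_congr hthis]
    exact (ENNReal.tsum_const_eq_top_of_ne_zero one_ne_zero).symm

end Final
noncomputable def Aseq {Ω : Type*} [MeasurableSpace Ω] (μ : Measure Ω)
    (I : Fin 3 → ℕ → Ω → ℝ) (i j n : ℕ) : ℝ :=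
  ∫ ω, Xw i I n ω * Yw j I n ω * (Tset i j I n).indicator (1 : Ω → ℝ) ω ∂μ

noncomputable def Gseq {Ω : Type*} [MeasurableSpace Ω] (μ : Measure Ω)
    (I : Fin 3 → ℕ → Ω → ℝ) (i j n : ℕ) : ℝ :=
  ∫ ω, Xw i I n ω * Yw j I n ω * (Xw i I n ω + Yw j I n ω)
    * (Tset i j I n).indicator (1 : Ω → ℝ) ω ∂μ

section Final2
set_option linter.unusedSectionVars false
set_option maxHeartbeats 1000000

variable {Ω : Type*} [MeasurableSpace Ω] {μ : Measure Ω} [IsProbabilityMeasure μ]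
  {I : Fin 3 → ℕ → Ω → ℝ}

lemma switch_A (i j n : ℕ) (ω : Ω) :
    Xw i I (n + 1) ω * Yw j I (n + 1) ω * (Tset i j I (n + 1)).indicator (1 : Ω → ℝ) ω
      = Xw i I (n + 1) ω * Yw j I (n + 1) ω * (Tset i j I n).indicator (1 : Ω → ℝ) ω := by
  by_cases h1 : ω ∈ Tset i j I (n + 1)
  · rw [Set.indicator_of_mem h1, Set.indicator_of_mem (Tset_antitone i j I (Nat.le_succ n) h1)]
  · by_cases h2 : ω ∈ Tset i j I n
    · have h0 : Xw i I (n + 1) ω * Yw j I (n + 1) ω = 0 := by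
        simp only [Tset, Set.mem_setOf_eq] at h1
        push_neg at h1
        obtain ⟨m, hm1, hmn, heq⟩ := h1
        have hm : m = n + 1 := by
          by_contra hne
          exact h2 m hm1 (by omega) heq
        rwa [hm] at heq
      rw [h0]
      simp
    · rw [Set.indicator_of_notMem h1, Set.indicator_of_notMem h2]

lemma switch_G (i j n : ℕ) (ω : Ω) :
    Xw i I (n + 1) ω * Yw j I (n + 1) ω * (Xw i I (n + 1) ω + Yw j I (n + 1) ω)
        * (Tset i j I (n + 1)).indicator (1 : Ω → ℝ) ω
      = Xw i I (n + 1) ω * Yw j I (n + 1) ω * (Xw i I (n + 1) ω + Yw j I (n + 1) ω)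
        * (Tset i j I n).indicator (1 : Ω → ℝ) ω := by
  by_cases h1 : ω ∈ Tset i j I (n + 1)
  · rw [Set.indicator_of_mem h1, Set.indicator_of_mem (Tset_antitone i j I (Nat.le_succ n) h1)]
  · by_cases h2 : ω ∈ Tset i j I n
    · have h0 : Xw i I (n + 1) ω * Yw j I (n + 1) ω = 0 := by
        simp only [Tset, Set.mem_setOf_eq] at h1
        push_neg at h1
        obtain ⟨m, hm1, hmn, heq⟩ := h1
        have hm : m = n + 1 := by
          by_contra hne
          exact h2 m hm1 (by omega) heq
        rwa [hm] at heq
      rw [h0]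
      simp
    · rw [Set.indicator_of_notMem h1, Set.indicator_of_notMem h2]

lemma Aseq_zero (i j : ℕ) : Aseq μ I i j 0 = (2 * (i : ℝ)) * (2 * (j : ℝ)) := by
  unfold Aseq
  simp [Tset_zero, Xw_zero, Yw_zero]

lemma Gseq_zero (i j : ℕ) :
    Gseq μ I i j 0 = (2 * (i : ℝ)) * (2 * (j : ℝ)) * (2 * (i : ℝ) + 2 * (j : ℝ)) := by
  unfold Gseq
  simp [Tset_zero, Xw_zero, Yw_zero]

lemma Aseq_succ (hmeas : ∀ a k, Measurable (I a k))
    (hindep : iIndepFun (β := fun _ : Fin 3 × ℕ => ℝ)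
      (fun p ω => I p.1 p.2 ω) μ)
    (hrad : ∀ a k, μ {ω | I a k ω = 1} = 1 / 2 ∧ μ {ω | I a k ω = -1} = 1 / 2)
    (i j n : ℕ) :
    Aseq μ I i j (n + 1) = Aseq μ I i j n - (μ (Tset i j I n)).toReal := by
  unfold Aseq
  rw [integral_congr_ae (Filter.Eventually.of_forall (switch_A i j n))]
  exact step_A hmeas hindep hrad i j n

lemma Gseq_succ (hmeas : ∀ a k, Measurable (I a k))
    (hindep : iIndepFun (β := fun _ : Fin 3 × ℕ => ℝ)
      (fun p ω => I p.1 p.2 ω) μ)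
    (hrad : ∀ a k, μ {ω | I a k ω = 1} = 1 / 2 ∧ μ {ω | I a k ω = -1} = 1 / 2)
    (i j n : ℕ) :
    Gseq μ I i j (n + 1) = Gseq μ I i j n := by
  unfold Gseq
  rw [integral_congr_ae (Filter.Eventually.of_forall (switch_G i j n))]
  exact step_G hmeas hindep hrad i j n

lemma Aseq_eq (hmeas : ∀ a k, Measurable (I a k))
    (hindep : iIndepFun (β := fun _ : Fin 3 × ℕ => ℝ)
      (fun p ω => I p.1 p.2 ω) μ)
    (hrad : ∀ a k, μ {ω | I a k ω = 1} = 1 / 2 ∧ μ {ω | I a k ω = -1} = 1 / 2)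
    (i j n : ℕ) :
    Aseq μ I i j n = (2 * (i : ℝ)) * (2 * (j : ℝ))
      - ∑ k ∈ Finset.range n, (μ (Tset i j I k)).toReal := by
  induction n with
  | zero => simp [Aseq_zero]
  | succ n ih =>
    rw [Aseq_succ hmeas hindep hrad i j n, ih, Finset.sum_range_succ]
    ring

lemma Gseq_eq (hmeas : ∀ a k, Measurable (I a k))
    (hindep : iIndepFun (β := fun _ : Fin 3 × ℕ => ℝ)
      (fun p ω => I p.1 p.2 ω) μ)
    (hrad : ∀ a k, μ {ω | I a k ω = 1} = 1 / 2 ∧ μ {ω | I a k ω = -1} = 1 / 2)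
    (i j n : ℕ) :
    Gseq μ I i j n = (2 * (i : ℝ)) * (2 * (j : ℝ)) * (2 * (i : ℝ) + 2 * (j : ℝ)) := by
  induction n with
  | zero => exact Gseq_zero i j
  | succ n ih => rw [Gseq_succ hmeas hindep hrad i j n, ih]

lemma Aseq_nonneg (hmeas : ∀ a k, Measurable (I a k))
    (hrad : ∀ a k, μ {ω | I a k ω = 1} = 1 / 2 ∧ μ {ω | I a k ω = -1} = 1 / 2)
    {i j : ℕ} (hi : 1 ≤ i) (hj : 1 ≤ j) (n : ℕ) :
    0 ≤ Aseq μ I i j n := by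
  refine integral_nonneg_of_ae ?_
  filter_upwards [ae_pm hmeas hrad] with ω hpm
  by_cases h : ω ∈ Tset i j I n
  · obtain ⟨⟨hx, -⟩, hy, -⟩ := pos_on_Tset hi hj hpm h n le_rfl
    rw [Set.indicator_of_mem h]
    simp only [Pi.zero_apply, Pi.one_apply, mul_one]
    nlinarith
  · rw [Set.indicator_of_notMem h]
    simp

lemma int_XYind (hmeas : ∀ a k, Measurable (I a k))
    (hrad : ∀ a k, μ {ω | I a k ω = 1} = 1 / 2 ∧ μ {ω | I a k ω = -1} = 1 / 2) (i j n : ℕ) :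
    Integrable (fun ω => Xw i I n ω * Yw j I n ω
      * (Tset i j I n).indicator (1 : Ω → ℝ) ω) μ := by
  refine integrable_of_bdd_s3 (C := (2 * (i:ℝ) + 2 * n) * (2 * (j:ℝ) + 2 * n) * 1)
    (((meas_Xw_amb hmeas i n).mul (meas_Yw_amb hmeas j n)).mul
      (meas_ind_amb hmeas i j n)).aestronglyMeasurable ?_
  filter_upwards [ae_pm hmeas hrad] with ω hω
  exact abs_mul_le (abs_mul_le (abs_Xw_le hω n) (abs_Yw_le hω n)) (abs_indicator_one_le _ ω)

lemma int_Gind (hmeas : ∀ a k, Measurable (I a k))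
    (hrad : ∀ a k, μ {ω | I a k ω = 1} = 1 / 2 ∧ μ {ω | I a k ω = -1} = 1 / 2) (i j n : ℕ) :
    Integrable (fun ω => Xw i I n ω * Yw j I n ω * (Xw i I n ω + Yw j I n ω)
      * (Tset i j I n).indicator (1 : Ω → ℝ) ω) μ := by
  refine integrable_of_bdd_s3
    (C := (2 * (i:ℝ) + 2 * n) * (2 * (j:ℝ) + 2 * n)
      * ((2 * (i:ℝ) + 2 * n) + (2 * (j:ℝ) + 2 * n)) * 1)
    ((((meas_Xw_amb hmeas i n).mul (meas_Yw_amb hmeas j n)).mul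
      ((meas_Xw_amb hmeas i n).add (meas_Yw_amb hmeas j n))).mul
      (meas_ind_amb hmeas i j n)).aestronglyMeasurable ?_
  filter_upwards [ae_pm hmeas hrad] with ω hω
  exact abs_mul_le (abs_mul_le (abs_mul_le (abs_Xw_le hω n) (abs_Yw_le hω n))
    (abs_add_le_of (abs_Xw_le hω n) (abs_Yw_le hω n))) (abs_indicator_one_le _ ω)

lemma Aseq_le (hmeas : ∀ a k, Measurable (I a k))
    (hrad : ∀ a k, μ {ω | I a k ω = 1} = 1 / 2 ∧ μ {ω | I a k ω = -1} = 1 / 2)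
    {i j : ℕ} (hi : 1 ≤ i) (hj : 1 ≤ j) {c : ℝ} (hc : 0 < c) (n : ℕ) :
    Aseq μ I i j n ≤ c ^ 2 / 4 * (μ (Tset i j I n)).toReal + (1 / c) * Gseq μ I i j n := by
  have int_h : Integrable ((Tset i j I n).indicator (1 : Ω → ℝ)) μ :=
    (integrable_const (1 : ℝ)).indicator (measSet_Tset hmeas i j n)
  have intG := int_Gind hmeas hrad i j n
  have int1 := int_XYind hmeas hrad i j n
  have intR : Integrable (fun ω => c ^ 2 / 4 * (Tset i j I n).indicator (1 : Ω → ℝ) ω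
      + (1 / c) * (Xw i I n ω * Yw j I n ω * (Xw i I n ω + Yw j I n ω)
        * (Tset i j I n).indicator (1 : Ω → ℝ) ω)) μ :=
    (int_h.const_mul _).add (intG.const_mul _)
  have hpt : ∀ᵐ ω ∂μ, Xw i I n ω * Yw j I n ω * (Tset i j I n).indicator (1 : Ω → ℝ) ω
      ≤ c ^ 2 / 4 * (Tset i j I n).indicator (1 : Ω → ℝ) ω
        + (1 / c) * (Xw i I n ω * Yw j I n ω * (Xw i I n ω + Yw j I n ω)
          * (Tset i j I n).indicator (1 : Ω → ℝ) ω) := by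
    filter_upwards [ae_pm hmeas hrad] with ω hpm
    by_cases h : ω ∈ Tset i j I n
    · obtain ⟨⟨hx, -⟩, hy, -⟩ := pos_on_Tset hi hj hpm h n le_rfl
      rw [Set.indicator_of_mem h]
      simp only [Pi.one_apply, mul_one]
      rcases le_or_gt (Xw i I n ω + Yw j I n ω) c with hle | hlt
      · have h4 : Xw i I n ω * Yw j I n ω ≤ c ^ 2 / 4 := by
          nlinarith [sq_nonneg (Xw i I n ω - Yw j I n ω)]
        have hXY : (0:ℝ) ≤ Xw i I n ω * Yw j I n ω :=
          mul_nonneg (by linarith) (by linarith)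
        have h5 : 0 ≤ (1 / c) * (Xw i I n ω * Yw j I n ω * (Xw i I n ω + Yw j I n ω)) :=
          mul_nonneg (by positivity) (mul_nonneg hXY (by linarith))
        linarith
      · have hXY : (0:ℝ) ≤ Xw i I n ω * Yw j I n ω :=
          mul_nonneg (by linarith) (by linarith)
        have key : Xw i I n ω * Yw j I n ω * c
            ≤ Xw i I n ω * Yw j I n ω * (Xw i I n ω + Yw j I n ω) := by
          rw [mul_assoc, mul_assoc]
          exact mul_le_mul_of_nonneg_left (by nlinarith) (by linarith)
        have h6 : (1 / c) * (Xw i I n ω * Yw j I n ω * c) = Xw i I n ω * Yw j I n ω := by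
          field_simp
        have h7 : (1 / c) * (Xw i I n ω * Yw j I n ω * c)
            ≤ (1 / c) * (Xw i I n ω * Yw j I n ω * (Xw i I n ω + Yw j I n ω)) :=
          mul_le_mul_of_nonneg_left key (by positivity)
        nlinarith [sq_nonneg c]
    · rw [Set.indicator_of_notMem h]
      simp
  calc Aseq μ I i j n
      ≤ ∫ ω, (c ^ 2 / 4 * (Tset i j I n).indicator (1 : Ω → ℝ) ω
        + (1 / c) * (Xw i I n ω * Yw j I n ω * (Xw i I n ω + Yw j I n ω)
          * (Tset i j I n).indicator (1 : Ω → ℝ) ω)) ∂μ :=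
        integral_mono_ae int1 intR hpt
    _ = c ^ 2 / 4 * (μ (Tset i j I n)).toReal + (1 / c) * Gseq μ I i j n := by
        rw [integral_add (int_h.const_mul _) (intG.const_mul _), integral_const_mul,
          integral_const_mul, integral_indicator_one (measSet_Tset hmeas i j n)]
        rfl

end Final2
section Final3
set_option linter.unusedSectionVars false
set_option maxHeartbeats 1000000

variable {Ω : Type*} [MeasurableSpace Ω] {μ : Measure Ω} [IsProbabilityMeasure μ]
  {I : Fin 3 → ℕ → Ω → ℝ}

lemma lintegral_tau (hmeas : ∀ a k, Measurable (I a k)) (i j : ℕ) :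
    ∫⁻ ω, collisionTime i j (I 0) (I 1) (I 2) ω ∂μ = ∑' n : ℕ, μ (Tset i j I n) := by
  have h1 : ∀ ω, collisionTime i j (I 0) (I 1) (I 2) ω
      = ∑' n : ℕ, (Tset i j I n).indicator (fun _ => (1 : ℝ≥0∞)) ω := by
    intro ω
    rw [tau_eq_tsum i j ω]
    refine tsum_congr fun n => ?_
    by_cases h : ω ∈ Tset i j I n
    · rw [if_pos ((tau_gt_iff i j n ω).2 h), Set.indicator_of_mem h]
    · rw [if_neg (fun hlt => h ((tau_gt_iff i j n ω).1 hlt)), Set.indicator_of_notMem h]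
  rw [lintegral_congr h1,
    lintegral_tsum (fun n => (measurable_const.indicator (measSet_Tset hmeas i j n)).aemeasurable)]
  refine tsum_congr fun n => ?_
  rw [lintegral_indicator_const (measSet_Tset hmeas i j n), one_mul]

lemma hasSum_pR (hmeas : ∀ a k, Measurable (I a k))
    (hindep : iIndepFun (β := fun _ : Fin 3 × ℕ => ℝ)
      (fun p ω => I p.1 p.2 ω) μ)
    (hrad : ∀ a k, μ {ω | I a k ω = 1} = 1 / 2 ∧ μ {ω | I a k ω = -1} = 1 / 2)
    {i j : ℕ} (hi : 1 ≤ i) (hj : 1 ≤ j) :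
    HasSum (fun n => (μ (Tset i j I n)).toReal) ((2 * (i : ℝ)) * (2 * (j : ℝ))) := by
  have hi' : (1 : ℝ) ≤ (i : ℝ) := by exact_mod_cast hi
  have hj' : (1 : ℝ) ≤ (j : ℝ) := by exact_mod_cast hj
  have hnn : ∀ n, 0 ≤ (μ (Tset i j I n)).toReal := fun n => ENNReal.toReal_nonneg
  have hpart : ∀ n, ∑ k ∈ Finset.range n, (μ (Tset i j I k)).toReal
      = (2 * (i : ℝ)) * (2 * (j : ℝ)) - Aseq μ I i j n := by
    intro n
    have := Aseq_eq hmeas hindep hrad i j n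
    linarith
  have hble : ∀ n, ∑ k ∈ Finset.range n, (μ (Tset i j I k)).toReal
      ≤ (2 * (i : ℝ)) * (2 * (j : ℝ)) := by
    intro n
    have := Aseq_nonneg hmeas hrad hi hj n
    rw [hpart n]
    linarith
  have hsummable : Summable (fun n => (μ (Tset i j I n)).toReal) :=
    summable_of_sum_range_le hnn hble
  have htend := hsummable.hasSum.tendsto_sum_nat
  have hAt : Filter.Tendsto (fun n => Aseq μ I i j n) Filter.atTop
      (nhds ((2 * (i : ℝ)) * (2 * (j : ℝ)) - ∑' n, (μ (Tset i j I n)).toReal)) := by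
    have heq : (fun n => Aseq μ I i j n)
        = fun n => (2 * (i : ℝ)) * (2 * (j : ℝ))
          - ∑ k ∈ Finset.range n, (μ (Tset i j I k)).toReal := by
      funext n
      rw [hpart n]
      ring
    rw [heq]
    exact tendsto_const_nhds.sub htend
  -- the key limit: `Aseq → 0`
  have hA0 : Filter.Tendsto (fun n => Aseq μ I i j n) Filter.atTop (nhds 0) := by
    rw [Metric.tendsto_atTop]
    intro ε hε
    set Gv := (2 * (i : ℝ)) * (2 * (j : ℝ)) * (2 * (i : ℝ) + 2 * (j : ℝ)) with hGvdef
    have hGv : 0 < Gv := by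
      have h1 : (0:ℝ) < 2 * (i:ℝ) := by linarith
      have h2 : (0:ℝ) < 2 * (j:ℝ) := by linarith
      have h3 : (0:ℝ) < 2 * (i:ℝ) + 2 * (j:ℝ) := by linarith
      positivity
    set c := 2 * Gv / ε with hcdef
    have hc : 0 < c := div_pos (by linarith) hε
    have hc2 : (1 / c) * Gv = ε / 2 := by
      rw [hcdef]
      field_simp
    set δ := (ε / 4) / (c ^ 2 / 4 + 1) with hδdef
    have hδpos : 0 < δ := div_pos (by linarith) (by positivity)
    obtain ⟨N, hN⟩ := Metric.tendsto_atTop.mp hsummable.tendsto_atTop_zero δ hδpos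
    refine ⟨N, fun n hn => ?_⟩
    have hp : (μ (Tset i j I n)).toReal < δ := by
      have := hN n hn
      rwa [Real.dist_eq, sub_zero, abs_of_nonneg (hnn n)] at this
    have hb := Aseq_le hmeas hrad hi hj hc n
    rw [Gseq_eq hmeas hindep hrad i j n, ← hGvdef, hc2] at hb
    have h1 : c ^ 2 / 4 * (μ (Tset i j I n)).toReal ≤ c ^ 2 / 4 * δ :=
      mul_le_mul_of_nonneg_left hp.le (by positivity)
    have h2 : (c ^ 2 / 4 + 1) * δ = ε / 4 := by
      rw [hδdef]
      field_simp
    have h3 : c ^ 2 / 4 * δ ≤ (c ^ 2 / 4 + 1) * δ := by nlinarith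
    rw [Real.dist_eq, sub_zero, abs_of_nonneg (Aseq_nonneg hmeas hrad hi hj n)]
    linarith
  have hzero : (2 * (i : ℝ)) * (2 * (j : ℝ)) - ∑' n, (μ (Tset i j I n)).toReal = 0 :=
    tendsto_nhds_unique hAt hA0
  have ht : ∑' n, (μ (Tset i j I n)).toReal = (2 * (i : ℝ)) * (2 * (j : ℝ)) := by linarith
  exact ht ▸ hsummable.hasSum

theorem expected_collision_time_eq_four_ij'
    (hmeas : ∀ a k, Measurable (I a k))
    (hindep : iIndepFun (β := fun _ : Fin 3 × ℕ => ℝ)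
      (fun p ω => I p.1 p.2 ω) μ)
    (hrad : ∀ a k, μ {ω | I a k ω = 1} = 1 / 2 ∧ μ {ω | I a k ω = -1} = 1 / 2)
    (i j : ℕ) (hi : 1 ≤ i) (hj : 1 ≤ j) :
    ∫⁻ ω, collisionTime i j (I 0) (I 1) (I 2) ω ∂μ = ((4 * i * j : ℕ) : ℝ≥0∞) := by
  rw [lintegral_tau hmeas i j]
  have h2 : ∀ n : ℕ, μ (Tset i j I n) = ENNReal.ofReal ((μ (Tset i j I n)).toReal) :=
    fun n => (ENNReal.ofReal_toReal (measure_ne_top μ _)).symm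
  have hsum := hasSum_pR hmeas hindep hrad hi hj
  rw [tsum_congr h2,
    ← ENNReal.ofReal_tsum_of_nonneg (fun n => ENNReal.toReal_nonneg) hsum.summable,
    hsum.tsum_eq]
  have h3 : ((2 * (i : ℝ)) * (2 * (j : ℝ))) = ((4 * i * j : ℕ) : ℝ) := by
    push_cast
    ring
  rw [h3, ENNReal.ofReal_natCast]

end Final3

/-- **Theorem 3.3.**  For three independent simple symmetric random walks
started from `-2i`, `0` and `2j` (`i, j ≥ 1`), built from three independent
i.i.d. Rademacher sequences, the first collision time
`τ_C = inf {n ≥ 1 : S_n^{(L)} = S_n^{(M)} or S_n^{(M)} = S_n^{(R)}}`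
satisfies `E[τ_C] = 4 i j`. -/
theorem expected_collision_time_eq_four_ij
    {Ω : Type*} [MeasurableSpace Ω] {μ : Measure Ω} [IsProbabilityMeasure μ]
    (I : Fin 3 → ℕ → Ω → ℝ)
    (hmeas : ∀ a k, Measurable (I a k))
    -- the three sequences together form an independent family :
    (hindep : iIndepFun (β := fun _ : Fin 3 × ℕ => ℝ)
      (fun p ω => I p.1 p.2 ω) μ)
    -- each increment is a Rademacher random variable :
    (hrad : ∀ a k, μ {ω | I a k ω = 1} = 1 / 2 ∧ μ {ω | I a k ω = -1} = 1 / 2)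
    (i j : ℕ) (hi : 1 ≤ i) (hj : 1 ≤ j) :
    ∫⁻ ω, collisionTime i j (I 0) (I 1) (I 2) ω ∂μ = ((4 * i * j : ℕ) : ℝ≥0∞) := by
  exact expected_collision_time_eq_four_ij' hmeas hindep hrad i j hi hj
end
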